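/- arXiv:2503.08837 — 7 statements merged into one kernel-verified Lean document; each statement's English description precedes it below -/
import Mathlib

section
/- Let z, z' : [0, T) → ℝ be càdlàg functions with 0 ≤ z(0) ≤ z'(0) and z(t) − z(s) ≤ z'(t) − z'(s) for all 0 ≤ s ≤ t < T. Let (x, ℓ) and (x', ℓ') be the solutions of the one-dimensional Skorokhod problems for z and z' respectively. Then x(t) ≤ x'(t) for all t ∈ [0, T), and ℓ(t) − ℓ(s) ≥ ℓ'(t) − ℓ'(s) for all 0 ≤ s ≤ t < T. -/
open Set Filter
open scoped ENNReal NNReal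

/-- `z` is càdlàg on `[0, T)`. -/
def CadlagOn (T : ℝ≥0∞) (z : ℝ → ℝ) : Prop :=
  ∀ t : ℝ, 0 ≤ t → ENNReal.ofReal t < T →
    ContinuousWithinAt z (Set.Ici t) t ∧
    (0 < t → ∃ l : ℝ, Filter.Tendsto z (nhdsWithin t (Set.Iio t)) (nhds l))

/-!
Let `ℓ` be the running maximum of `(-z)⁺`. Domination of increments and `z 0 ≤ z' 0`
give `(-z u)⁺ ≤ (z' t - z t) + (-z' u)⁺` for `u ≤ t`, hence `ℓ t ≤ z' t - z t + ℓ' t`,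
i.e. `x ≤ x'`. For `s ≤ u ≤ t`, domination from time `s` together with `x s ≤ x' s`
gives `-z' u ≤ -z u + z s - z' s ≤ ℓ t - ℓ s + ℓ' s`, so `ℓ'` rises on `[s, t]` by at
most what `ℓ` does.
-/

open Topology

theorem IsCompact.bddBelow_image_of_eventually_ge {X α : Type*} [TopologicalSpace X]
    [SemilatticeInf α] [Nonempty α] {f : X → α} {K : Set X} (hK : IsCompact K)
    (h : ∀ x ∈ K, ∃ c, ∀ᶠ y in 𝓝[K] x, c ≤ f y) : BddBelow (f '' K) := by
  refine hK.induction_on (p := fun s => BddBelow (f '' s)) (by simp)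
    (fun s t hst ht => ht.mono (image_mono hst))
    (fun s t hs ht => by rw [image_union]; exact hs.union ht) fun x hx => ?_
  obtain ⟨c, hc⟩ := h x hx
  exact ⟨{y | c ≤ f y}, hc, c, by rintro _ ⟨y, hy, rfl⟩; exact hy⟩

theorem CadlagOn.bddBelow_image_Icc {T : ℝ≥0∞} {z : ℝ → ℝ} (hz : CadlagOn T z) {t : ℝ}
    (htT : ENNReal.ofReal t < T) : BddBelow (z '' Icc 0 t) := by
  refine isCompact_Icc.bddBelow_image_of_eventually_ge fun u ⟨hu0, hut⟩ => ?_
  obtain ⟨hright, hleft⟩ := hz u hu0 ((ENNReal.ofReal_le_ofReal hut).trans_lt htT)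
  have hge : ∀ᶠ y in 𝓝[≥] u, z u - 1 ≤ z y := hright.eventually_const_le (sub_one_lt _)
  rcases hu0.eq_or_lt with rfl | hu0
  · exact ⟨z 0 - 1, nhdsWithin_mono _ Icc_subset_Ici_self hge⟩
  obtain ⟨l, hl⟩ := hleft hu0
  have hlt : ∀ᶠ y in 𝓝[<] u, l - 1 ≤ z y := hl.eventually_const_le (sub_one_lt _)
  refine ⟨min (l - 1) (z u - 1), nhdsWithin_le_nhds ?_⟩
  rw [← nhdsLT_sup_nhdsGE]
  exact eventually_sup.2
    ⟨hlt.mono fun _ h => min_le_of_left_le h, hge.mono fun _ h => min_le_of_right_le h⟩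

theorem bddBelow_image_of_sub_le_sub {z z' : ℝ → ℝ} {s : Set ℝ} {t : ℝ}
    (hb : BddBelow (z' '' s)) (h : ∀ u ∈ s, z t - z u ≤ z' t - z' u) :
    BddBelow (z '' s) := by
  obtain ⟨m, hm⟩ := hb
  refine ⟨z t - z' t + m, ?_⟩
  rintro _ ⟨u, hu, rfl⟩
  linarith [h u hu, hm ⟨u, hu, rfl⟩]

noncomputable def skorokhodRegulator (z : ℝ → ℝ) (t : ℝ) : ℝ :=
  sSup ((fun u => max (-z u) 0) '' Icc 0 t)

section skorokhodRegulator

variable {z z' : ℝ → ℝ} {s t u c : ℝ}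

theorem le_skorokhodRegulator (hb : BddBelow (z '' Icc 0 t)) (hu : u ∈ Icc 0 t) :
    max (-z u) 0 ≤ skorokhodRegulator z t := by
  obtain ⟨m, hm⟩ := hb
  refine le_csSup ⟨max (-m) 0, ?_⟩ (mem_image_of_mem _ hu)
  rintro _ ⟨v, hv, rfl⟩
  exact max_le_max (neg_le_neg (hm (mem_image_of_mem z hv))) le_rfl

theorem skorokhodRegulator_le (ht : 0 ≤ t) (h : ∀ u ∈ Icc 0 t, max (-z u) 0 ≤ c) :
    skorokhodRegulator z t ≤ c :=
  csSup_le ((nonempty_Icc.2 ht).image _) (forall_mem_image.2 h)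

theorem skorokhodRegulator_nonneg (hb : BddBelow (z '' Icc 0 t)) (ht : 0 ≤ t) :
    0 ≤ skorokhodRegulator z t :=
  (le_max_right _ _).trans (le_skorokhodRegulator hb ⟨le_rfl, ht⟩)

theorem skorokhodRegulator_mono (hb : BddBelow (z '' Icc 0 t)) (hs : 0 ≤ s) (hst : s ≤ t) :
    skorokhodRegulator z s ≤ skorokhodRegulator z t :=
  skorokhodRegulator_le hs fun _ hu => le_skorokhodRegulator hb ⟨hu.1, hu.2.trans hst⟩

theorem add_skorokhodRegulator_le_add (ht : 0 ≤ t) (hb' : BddBelow (z' '' Icc 0 t))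
    (h0 : z 0 ≤ z' 0) (hincr : ∀ u ∈ Icc 0 t, z t - z u ≤ z' t - z' u) :
    z t + skorokhodRegulator z t ≤ z' t + skorokhodRegulator z' t := by
  have hgap : 0 ≤ z' t - z t := by linarith [hincr 0 ⟨le_rfl, ht⟩]
  suffices skorokhodRegulator z t ≤ z' t - z t + skorokhodRegulator z' t by linarith
  refine skorokhodRegulator_le ht fun u hu => max_le ?_ ?_
  · linarith [hincr u hu, le_max_left (-z' u) 0, le_skorokhodRegulator hb' hu]
  · linarith [skorokhodRegulator_nonneg hb' ht]

theorem skorokhodRegulator_sub_le_sub (hs : 0 ≤ s) (hst : s ≤ t)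
    (hb : BddBelow (z '' Icc 0 t)) (hb' : BddBelow (z' '' Icc 0 s))
    (hxs : z s + skorokhodRegulator z s ≤ z' s + skorokhodRegulator z' s)
    (hincr : ∀ u ∈ Icc s t, z u - z s ≤ z' u - z' s) :
    skorokhodRegulator z' t - skorokhodRegulator z' s ≤
      skorokhodRegulator z t - skorokhodRegulator z s := by
  have hmono := skorokhodRegulator_mono hb hs hst
  suffices skorokhodRegulator z' t ≤
      skorokhodRegulator z t - skorokhodRegulator z s + skorokhodRegulator z' s by linarith
  refine skorokhodRegulator_le (hs.trans hst) fun u hu => ?_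
  rcases le_total u s with hus | hsu
  · linarith [le_skorokhodRegulator hb' ⟨hu.1, hus⟩]
  refine max_le ?_ ?_
  · linarith [hincr u ⟨hsu, hu.2⟩, le_max_left (-z u) 0, le_skorokhodRegulator hb hu]
  · linarith [skorokhodRegulator_nonneg hb' hs]

end skorokhodRegulator

theorem skorokhod_comparison_general (T : ℝ≥0∞) (z z' : ℝ → ℝ)
    (hz' : CadlagOn T z')
    (hz0le : z 0 ≤ z' 0)
    (hincr : ∀ s t : ℝ, 0 ≤ s → s ≤ t → ENNReal.ofReal t < T → z t - z s ≤ z' t - z' s)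
    (ℓ x ℓ' x' : ℝ → ℝ)
    (hℓ : ∀ t : ℝ, 0 ≤ t → ENNReal.ofReal t < T →
      ℓ t = sSup ((fun u => max (-(z u)) 0) '' Set.Icc 0 t))
    (hx : ∀ t : ℝ, 0 ≤ t → ENNReal.ofReal t < T → x t = z t + ℓ t)
    (hℓ' : ∀ t : ℝ, 0 ≤ t → ENNReal.ofReal t < T →
      ℓ' t = sSup ((fun u => max (-(z' u)) 0) '' Set.Icc 0 t))
    (hx' : ∀ t : ℝ, 0 ≤ t → ENNReal.ofReal t < T → x' t = z' t + ℓ' t) :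
    (∀ t : ℝ, 0 ≤ t → ENNReal.ofReal t < T → x t ≤ x' t) ∧
    (∀ s t : ℝ, 0 ≤ s → s ≤ t → ENNReal.ofReal t < T → ℓ' t - ℓ' s ≤ ℓ t - ℓ s) := by
  have hb' : ∀ t, ENNReal.ofReal t < T → BddBelow (z' '' Icc 0 t) :=
    fun t htT => hz'.bddBelow_image_Icc htT
  have hb : ∀ t, ENNReal.ofReal t < T → BddBelow (z '' Icc 0 t) := fun t htT =>
    bddBelow_image_of_sub_le_sub (hb' t htT) fun u hu => hincr u t hu.1 hu.2 htT
  have hcomp : ∀ t, 0 ≤ t → ENNReal.ofReal t < T →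
      z t + skorokhodRegulator z t ≤ z' t + skorokhodRegulator z' t := fun t ht htT =>
    add_skorokhodRegulator_le_add ht (hb' t htT) hz0le fun u hu => hincr u t hu.1 hu.2 htT
  refine ⟨fun t ht htT => ?_, fun s t hs hst htT => ?_⟩
  · rw [hx t ht htT, hx' t ht htT, hℓ t ht htT, hℓ' t ht htT]
    exact hcomp t ht htT
  · have hsT : ENNReal.ofReal s < T := (ENNReal.ofReal_le_ofReal hst).trans_lt htT
    have ht : 0 ≤ t := hs.trans hst
    rw [hℓ t ht htT, hℓ s hs hsT, hℓ' t ht htT, hℓ' s hs hsT]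
    exact skorokhodRegulator_sub_le_sub hs hst (hb t htT) (hb' s hsT) (hcomp s hs hsT)
      fun u hu => hincr s u hs hu.1 ((ENNReal.ofReal_le_ofReal hu.2).trans_lt htT)

/-- Comparison for the one-dimensional Skorokhod problem: if `z 0 ≤ z' 0` and the increments
of `z` are dominated by those of `z'`, then `x ≤ x'` and the increments of `ℓ'` are dominated
by those of `ℓ`, where `(x, ℓ)` and `(x', ℓ')` are the explicit Skorokhod solutions for
`z` and `z'`. -/
theorem skorokhod_comparison (T : ℝ≥0∞) (z z' : ℝ → ℝ)
    (hz : CadlagOn T z) (hz' : CadlagOn T z')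
    (hz00 : 0 ≤ z 0) (hz0le : z 0 ≤ z' 0)
    (hincr : ∀ s t : ℝ, 0 ≤ s → s ≤ t → ENNReal.ofReal t < T → z t - z s ≤ z' t - z' s)
    (ℓ x ℓ' x' : ℝ → ℝ)
    (hℓ : ∀ t : ℝ, 0 ≤ t → ENNReal.ofReal t < T →
      ℓ t = sSup ((fun u => max (-(z u)) 0) '' Set.Icc 0 t))
    (hx : ∀ t : ℝ, 0 ≤ t → ENNReal.ofReal t < T → x t = z t + ℓ t)
    (hℓ' : ∀ t : ℝ, 0 ≤ t → ENNReal.ofReal t < T →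
      ℓ' t = sSup ((fun u => max (-(z' u)) 0) '' Set.Icc 0 t))
    (hx' : ∀ t : ℝ, 0 ≤ t → ENNReal.ofReal t < T → x' t = z' t + ℓ' t) :
    (∀ t : ℝ, 0 ≤ t → ENNReal.ofReal t < T → x t ≤ x' t) ∧
    (∀ s t : ℝ, 0 ≤ s → s ≤ t → ENNReal.ofReal t < T → ℓ' t - ℓ' s ≤ ℓ t - ℓ s) :=
  skorokhod_comparison_general T z z' hz' hz0le hincr ℓ x ℓ' x' hℓ hx hℓ' hx'
end

section
/- Let Q be an N×N matrix with nonnegative entries, let I ⊆ {1,…,N} be nonempty, and let I^a ⊆ I be the set of active nodes determined by a diagonal nonnegativity pattern (a_{ii})_i: i ∈ I^a iff there exist j ∈ I with a_{jj} > 0 and a path i₀ = j, i₁, …, i_n = i with all i_k ∈ I and q_{i_{k+1} i_k} > 0 for each k. Suppose ρ(Q[I^a]) > 0 where Q[I^a] is the submatrix (q_{ij})_{i,j ∈ I^a} and ρ denotes its largest real eigenvalue, and let v ∈ [0,∞)^{I^a} be a nonzero left-eigenvector of Q[I^a] for the eigenvalue ρ(Q[I^a]). Then there exists i ∈ I^a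 with v_i > 0 and a_{ii} > 0. -/
open Finset
open scoped Classical

/-- A node `i` is *active* for the index set `I` if it lies in `I` and is reachable, within
`I` and along edges `(u, v)` with `Q v u > 0`, from some node `j ∈ I` with `a j > 0`. -/
def ActiveNode {N : ℕ} (Q : Matrix (Fin N) (Fin N) ℝ) (a : Fin N → ℝ)
    (I : Finset (Fin N)) (i : Fin N) : Prop :=
  i ∈ I ∧ ∃ j ∈ I, 0 < a j ∧
    Relation.ReflTransGen (fun u v => u ∈ I ∧ v ∈ I ∧ 0 < Q v u) j i

/-- If `v` is a nonzero nonnegative left-eigenvector of the active-node submatrix `Q[Iᵃ]`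
for a positive eigenvalue `ρ`, then some active node `i` has `v i > 0` and `a i > 0`. -/
theorem active_eigenvector_positive_entry {N : ℕ} (Q : Matrix (Fin N) (Fin N) ℝ)
    (hQ : ∀ i j, 0 ≤ Q i j) (a : Fin N → ℝ) (ha : ∀ i, 0 ≤ a i)
    (I : Finset (Fin N)) (hI : I.Nonempty)
    (ρ : ℝ) (hρ : 0 < ρ)
    (v : Fin N → ℝ) (hv_nonneg : ∀ i, 0 ≤ v i)
    (hv_supp : ∀ i, v i ≠ 0 → ActiveNode Q a I i)
    (hv_ne : ∃ i, v i ≠ 0)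
    (heig : ∀ j, ActiveNode Q a I j →
      ∑ i ∈ Finset.univ.filter (fun i => ActiveNode Q a I i), v i * Q i j = ρ * v j) :
    ∃ i, ActiveNode Q a I i ∧ 0 < v i ∧ 0 < a i := by
  obtain ⟨i, hvi⟩ := hv_ne
  obtain ⟨hiI, j, hjI, haj, hpath⟩ := hv_supp i hvi
  have key : ∀ u, Relation.ReflTransGen (fun u v => u ∈ I ∧ v ∈ I ∧ 0 < Q v u) u i →
      ActiveNode Q a I u → 0 < v u := by
    intro u hp
    induction hp using Relation.ReflTransGen.head_induction_on with
    | refl => intro _; exact lt_of_le_of_ne (hv_nonneg i) (Ne.symm hvi)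
    | head hstep htail ih =>
      rename_i u c
      intro hu
      obtain ⟨huI, j', hj'I, haj', hp'⟩ := hu
      have hc : ActiveNode Q a I c := ⟨hstep.2.1, j', hj'I, haj', hp'.tail hstep⟩
      have hvc := ih hc
      have hsum := heig u ⟨huI, j', hj'I, haj', hp'⟩
      have hpos : 0 < ∑ w ∈ Finset.univ.filter (fun w => ActiveNode Q a I w), v w * Q w u := by
        apply Finset.sum_pos'
        · intro w _; exact mul_nonneg (hv_nonneg w) (hQ w u)
        · exact ⟨c, Finset.mem_filter.mpr ⟨Finset.mem_univ c, hc⟩, mul_pos hvc hstep.2.2⟩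
      rw [hsum] at hpos
      nlinarith [hv_nonneg u]
  exact ⟨j, ⟨hjI, j, hjI, haj, .refl⟩, key j hpath ⟨hjI, j, hjI, haj, .refl⟩, haj⟩
end

section
/- Let ξ be a nonnegative random variable and W a standard Brownian motion independent of ξ. Let L(t) = sup_{0 ≤ s ≤ t} max(−(ξ + W(s)), 0) be the reflection term of the Skorokhod problem for ξ + W, and set f(t) = E[L(t)]. Then there exist t₀ > 0 and C > 0 such that f(t) ≥ C √(t − t₀) for all t ≥ t₀. -/
open Set Filter MeasureTheory ProbabilityTheory
open scoped ENNReal NNReal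

/-- A standard (one-dimensional) Brownian motion: starts at zero, has continuous paths,
Gaussian increments of the correct variance, and independent increments over disjoint
intervals. -/
def IsStandardBM {Ω : Type*} [MeasureSpace Ω] (B : ℝ → Ω → ℝ) : Prop :=
  (∀ ω, B 0 ω = 0) ∧
  (∀ ω, Continuous fun t => B t ω) ∧
  (∀ t : ℝ, Measurable (B t)) ∧
  (∀ s t : ℝ, 0 ≤ s → s ≤ t →
    MeasureTheory.Measure.map (fun ω => B t ω - B s ω) (ℙ : MeasureTheory.Measure Ω) =
      ProbabilityTheory.gaussianReal 0 (Real.toNNReal (t - s))) ∧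
  (∀ s t u v : ℝ, 0 ≤ s → s ≤ t → t ≤ u → u ≤ v →
    ProbabilityTheory.IndepFun (fun ω => B t ω - B s ω) (fun ω => B v ω - B u ω)
      (ℙ : MeasureTheory.Measure Ω))

/-!
On the event `{ξ ≤ x₀, W t ≤ -√t}`, whose probability is at least `P(ξ ≤ x₀) · P(N(0,1) ≤ -1)`
by independence and Brownian scaling, the reflection term `L t` is at least `√t - x₀`; Markov's
inequality then gives `f t ≥ c (√t - x₀)`, which dominates `C √(t - t₀)` once `√t ≥ 2 x₀`.

Since `f t` is a Bochner integral, this needs `L t` to be integrable. As `ξ ≥ 0`, `L t` is bounded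
by `sup_{s ≤ t} |W s|`, whose mean is finite by Kolmogorov's dyadic chaining argument; the chaining
uses only the fourth moments `E |W u - W s| ^ 4 = 3 (u - s) ^ 2` of the increments.
-/

open Topology

section Chaining

variable {E : Type*} [PseudoEMetricSpace E] {w : ℝ → E} {t : ℝ} {D : ℕ → ℝ≥0∞}

lemma edist_dyadic_le_sum_range
    (hD : ∀ k, ∀ j : ℕ, j < 2 ^ k → edist (w (j * t / 2 ^ k)) (w ((j + 1) * t / 2 ^ k)) ≤ D k)
    (n : ℕ) :
    ∀ i : ℕ, i ≤ 2 ^ n → edist (w 0) (w (i * t / 2 ^ n)) ≤ ∑ k ∈ Finset.range (n + 1), D k := by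
  induction n with
  | zero =>
    intro i hi
    interval_cases i
    · simp
    · simpa using hD 0 0 one_pos
  | succ n ih =>
    intro i hi
    obtain ⟨j, rfl | rfl⟩ := Nat.even_or_odd' i
    · have hmid : ((2 * j : ℕ) : ℝ) * t / 2 ^ (n + 1) = j * t / 2 ^ n := by push_cast; ring
      rw [hmid, Finset.sum_range_succ]
      exact (ih j (by omega)).trans le_self_add
    · have hstep := hD (n + 1) (2 * j) (by omega)
      have hmid : ((2 * j : ℕ) : ℝ) * t / 2 ^ (n + 1) = j * t / 2 ^ n := by push_cast; ring
      have hend : ((2 * j : ℕ) + 1 : ℝ) = ((2 * j + 1 : ℕ) : ℝ) := by push_cast; ring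
      rw [hmid, hend] at hstep
      calc _ ≤ edist (w 0) (w (j * t / 2 ^ n)) + D (n + 1) :=
            (edist_triangle _ _ _).trans (add_le_add_right hstep _)
        _ ≤ ∑ k ∈ Finset.range (n + 1), D k + D (n + 1) := by gcongr; exact ih j (by omega)
        _ = _ := (Finset.sum_range_succ _ _).symm

lemma edist_le_tsum_of_dyadic (hw : Continuous w) (ht : 0 < t)
    (hD : ∀ k, ∀ j : ℕ, j < 2 ^ k → edist (w (j * t / 2 ^ k)) (w ((j + 1) * t / 2 ^ k)) ≤ D k)
    {s : ℝ} (hs : s ∈ Icc 0 t) : edist (w 0) (w s) ≤ ∑' k, D k := by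
  set u : ℕ → ℝ := fun n => ⌊s * 2 ^ n / t⌋₊ * t / 2 ^ n
  have hu : ∀ n, s - t / 2 ^ n ≤ u n ∧ u n ≤ s := by
    intro n
    have hs' : s * 2 ^ n / t * t / 2 ^ n = s := by field_simp
    have h₁ := Nat.floor_le (a := s * 2 ^ n / t) (by have := hs.1; positivity)
    have h₂ := Nat.lt_floor_add_one (s * 2 ^ n / t)
    constructor
    · rw [sub_le_iff_le_add]
      calc s = s * 2 ^ n / t * t / 2 ^ n := hs'.symm
        _ ≤ (⌊s * 2 ^ n / t⌋₊ + 1) * t / 2 ^ n := by gcongr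
        _ = u n + t / 2 ^ n := by ring
    · calc u n ≤ s * 2 ^ n / t * t / 2 ^ n := by simp only [u]; gcongr
        _ = s := hs'
  have hlim : Tendsto u atTop (𝓝 s) := by
    have hgap : Tendsto (fun n : ℕ => s - t / 2 ^ n) atTop (𝓝 s) := by
      simpa [div_eq_mul_inv] using tendsto_const_nhds.sub
        ((tendsto_pow_atTop_nhds_zero_of_lt_one (by norm_num : (0 : ℝ) ≤ 2⁻¹)
          (by norm_num)).const_mul t)
    exact tendsto_of_tendsto_of_tendsto_of_le_of_le hgap tendsto_const_nhds
      (fun n => (hu n).1) (fun n => (hu n).2)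
  refine le_of_tendsto' ((continuous_const.edist hw).tendsto s |>.comp hlim) fun n => ?_
  refine (edist_dyadic_le_sum_range hD n _ (Nat.floor_le_of_le ?_)).trans
    (ENNReal.sum_le_tsum _)
  rw [div_le_iff₀ ht]; push_cast
  nlinarith [hs.2, (by positivity : (0 : ℝ) < 2 ^ n)]

end Chaining

section Kolmogorov

variable {Ω E : Type*} [PseudoEMetricSpace E]

noncomputable def dyadicIncrementNorm (X : ℝ → Ω → E) (t p : ℝ) (k : ℕ) (ω : Ω) : ℝ≥0∞ :=
  (∑ j ∈ Finset.range (2 ^ k), edist (X (j * t / 2 ^ k) ω) (X ((j + 1) * t / 2 ^ k) ω) ^ p) ^ p⁻¹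

variable {X : ℝ → Ω → E} {t p q : ℝ}

lemma edist_le_dyadicIncrementNorm (hp : 0 < p) (ω : Ω) (k : ℕ) {j : ℕ} (hj : j < 2 ^ k) :
    edist (X (j * t / 2 ^ k) ω) (X ((j + 1) * t / 2 ^ k) ω) ≤ dyadicIncrementNorm X t p k ω := by
  rw [dyadicIncrementNorm, ← ENNReal.rpow_rpow_inv hp.ne' (edist _ _)]
  gcongr
  exact Finset.single_le_sum
    (f := fun j : ℕ => edist (X (j * t / 2 ^ k) ω) (X ((j + 1) * t / 2 ^ k) ω) ^ p)
    (fun _ _ => zero_le) (Finset.mem_range.2 hj)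

variable [MeasurableSpace Ω] {P : Measure Ω} {K : ℝ≥0∞}

lemma lintegral_le_rpow_lintegral_rpow [IsProbabilityMeasure P] {g : Ω → ℝ≥0∞}
    (hg : AEMeasurable g P) (hp : 1 ≤ p) :
    ∫⁻ ω, g ω ∂P ≤ (∫⁻ ω, g ω ^ p ∂P) ^ p⁻¹ := by
  have := eLpNorm'_le_eLpNorm'_of_exponent_le one_pos hp P hg.aestronglyMeasurable
  simpa [eLpNorm'_eq_lintegral_enorm, one_div] using this

lemma aemeasurable_dyadicIncrementNorm
    (hmeas : ∀ s u, AEMeasurable (fun ω => edist (X s ω) (X u ω)) P) (k : ℕ) :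
    AEMeasurable (dyadicIncrementNorm X t p k) P := by
  unfold dyadicIncrementNorm
  exact (Finset.aemeasurable_fun_sum _ fun j _ => (hmeas _ _).pow_const p).pow_const _

lemma lintegral_dyadicIncrementNorm_le [IsProbabilityMeasure P] (hp : 1 ≤ p) (hq : 0 ≤ q)
    (ht : 0 ≤ t) (hmeas : ∀ s u, AEMeasurable (fun ω => edist (X s ω) (X u ω)) P)
    (hmom : ∀ s u, 0 ≤ s → s ≤ u → ∫⁻ ω, edist (X s ω) (X u ω) ^ p ∂P ≤ K * edist s u ^ q)
    (k : ℕ) :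
    ∫⁻ ω, dyadicIncrementNorm X t p k ω ∂P ≤
      (K * ENNReal.ofReal (t ^ q)) ^ p⁻¹ * (ENNReal.ofReal (2 / 2 ^ q) ^ p⁻¹) ^ k := by
  have hlevel : ∀ j : ℕ, ∫⁻ ω, edist (X (j * t / 2 ^ k) ω) (X ((j + 1) * t / 2 ^ k) ω) ^ p ∂P
      ≤ K * ENNReal.ofReal ((t / 2 ^ k) ^ q) := by
    intro j
    refine (hmom _ _ (by positivity) (by gcongr; linarith)).trans_eq ?_
    rw [edist_dist, Real.dist_eq, ENNReal.ofReal_rpow_of_nonneg (abs_nonneg _) hq]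
    congr 3
    rw [abs_sub_comm, abs_of_nonneg (by rw [← sub_div]; ring_nf; positivity)]
    ring
  have hcount : (2 ^ k : ℝ≥0∞) * ENNReal.ofReal ((t / 2 ^ k) ^ q)
      = ENNReal.ofReal (t ^ q) * ENNReal.ofReal (2 / 2 ^ q) ^ k := by
    rw [← ENNReal.ofReal_pow (by positivity), ← ENNReal.ofReal_mul (by positivity),
      ← ENNReal.ofReal_ofNat 2, ← ENNReal.ofReal_pow (by norm_num),
      ← ENNReal.ofReal_mul (by positivity), Real.div_rpow ht (by positivity), div_pow,
      Real.rpow_pow_comm (by norm_num)]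
    congr 1
    ring
  calc ∫⁻ ω, dyadicIncrementNorm X t p k ω ∂P
      ≤ (∫⁻ ω, dyadicIncrementNorm X t p k ω ^ p ∂P) ^ p⁻¹ :=
        lintegral_le_rpow_lintegral_rpow (aemeasurable_dyadicIncrementNorm hmeas k) hp
    _ ≤ (K * ENNReal.ofReal (t ^ q) * ENNReal.ofReal (2 / 2 ^ q) ^ k) ^ p⁻¹ := by
        gcongr
        simp_rw [dyadicIncrementNorm, ← ENNReal.rpow_mul, inv_mul_cancel₀ (by linarith : p ≠ 0),
          ENNReal.rpow_one]
        rw [lintegral_finsetSum' _ fun j _ => (hmeas _ _).pow_const p]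
        refine (Finset.sum_le_sum fun j _ => hlevel j).trans_eq ?_
        rw [Finset.sum_const, Finset.card_range, nsmul_eq_mul, mul_assoc, ← hcount]
        push_cast; ring
    _ = _ := by
        rw [ENNReal.mul_rpow_of_nonneg _ _ (by positivity)]
        congr 1
        rw [← ENNReal.rpow_natCast, ← ENNReal.rpow_natCast, ← ENNReal.rpow_mul,
          ← ENNReal.rpow_mul, mul_comm]

lemma lintegral_iSup_edist_lt_top [IsProbabilityMeasure P] (hp : 1 ≤ p) (hq : 1 < q)
    (hK : K ≠ ⊤) (hcont : ∀ ω, Continuous (X · ω))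
    (hmeas : ∀ s u, AEMeasurable (fun ω => edist (X s ω) (X u ω)) P)
    (hmom : ∀ s u, 0 ≤ s → s ≤ u → ∫⁻ ω, edist (X s ω) (X u ω) ^ p ∂P ≤ K * edist s u ^ q)
    (ht : 0 < t) :
    ∫⁻ ω, ⨆ s ∈ Icc 0 t, edist (X 0 ω) (X s ω) ∂P < ⊤ := by
  set ρ := ENNReal.ofReal (2 / 2 ^ q) ^ p⁻¹
  have hρ : ρ < 1 := by
    refine ENNReal.rpow_lt_one ?_ (by positivity)
    rw [ENNReal.ofReal_lt_one, div_lt_one (by positivity)]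
    simpa using Real.rpow_lt_rpow_of_exponent_lt (by norm_num : (1 : ℝ) < 2) hq
  calc ∫⁻ ω, ⨆ s ∈ Icc 0 t, edist (X 0 ω) (X s ω) ∂P
      ≤ ∫⁻ ω, ∑' k, dyadicIncrementNorm X t p k ω ∂P :=
        lintegral_mono fun ω => iSup₂_le fun s hs => edist_le_tsum_of_dyadic (hcont ω) ht
          (fun k j hj => edist_le_dyadicIncrementNorm (by linarith) ω k hj) hs
    _ = ∑' k, ∫⁻ ω, dyadicIncrementNorm X t p k ω ∂P :=
        lintegral_tsum fun k => aemeasurable_dyadicIncrementNorm hmeas k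
    _ ≤ ∑' k, (K * ENNReal.ofReal (t ^ q)) ^ p⁻¹ * ρ ^ k :=
        ENNReal.tsum_le_tsum fun k =>
          lintegral_dyadicIncrementNorm_le hp (by linarith) ht.le hmeas hmom k
    _ = (K * ENNReal.ofReal (t ^ q)) ^ p⁻¹ * (1 - ρ)⁻¹ := by
        rw [ENNReal.tsum_mul_left, ENNReal.tsum_geometric]
    _ < ⊤ := ENNReal.mul_lt_top
        (ENNReal.rpow_lt_top_of_nonneg (by positivity)
          (ENNReal.mul_ne_top hK ENNReal.ofReal_ne_top))
        (ENNReal.inv_lt_top.2 (tsub_pos_of_lt hρ))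

end Kolmogorov

lemma measurable_ciSup_of_continuous {ι δ : Type*} [MeasurableSpace δ] [TopologicalSpace ι]
    [TopologicalSpace.SeparableSpace ι] [Nonempty ι] {f : ι → δ → ℝ}
    (hmeas : ∀ i, Measurable (f i)) (hcont : ∀ x, Continuous (f · x))
    (hbdd : ∀ x, BddAbove (range (f · x))) :
    Measurable fun x => ⨆ i, f i x := by
  obtain ⟨J, hJc, hJd⟩ := TopologicalSpace.exists_countable_dense ι
  refine measurable_of_Ioi fun c => ?_
  have hpre : (fun x => ⨆ i, f i x) ⁻¹' Ioi c = ⋃ j ∈ J, {x | c < f j x} := by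
    ext x
    simp only [mem_preimage, mem_Ioi, lt_ciSup_iff (hbdd x), mem_iUnion, mem_ofPred_eq,
      exists_prop]
    refine ⟨fun ⟨i, hi⟩ => ?_, fun ⟨j, _, hj⟩ => ⟨j, hj⟩⟩
    exact hJd.exists_mem_open (isOpen_lt continuous_const (hcont x)) ⟨i, hi⟩
  rw [hpre]
  exact .biUnion hJc fun j _ => measurableSet_lt measurable_const (hmeas j)

lemma integrable_sSup_image_Icc {Ω : Type*} [MeasurableSpace Ω] {P : Measure Ω}
    {Y : ℝ → Ω → ℝ} (hmeas : ∀ s, Measurable (Y s)) (hcont : ∀ ω, Continuous (Y · ω))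
    {a b : ℝ} (hab : a ≤ b) {G : Ω → ℝ≥0∞} (hG : ∫⁻ ω, G ω ∂P < ⊤)
    (hle : ∀ ω, ∀ s ∈ Icc a b, ‖Y s ω‖ₑ ≤ G ω) :
    Integrable (fun ω => sSup ((Y · ω) '' Icc a b)) P := by
  have hcompact : ∀ ω, IsCompact ((Y · ω) '' Icc a b) := fun ω =>
    isCompact_Icc.image (hcont ω)
  have hmeasSup : Measurable fun ω => sSup ((Y · ω) '' Icc a b) := by
    simp_rw [sSup_image']
    have : Nonempty (Icc a b) := ⟨⟨a, left_mem_Icc.2 hab⟩⟩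
    refine measurable_ciSup_of_continuous (fun s => hmeas s)
      (fun ω => (hcont ω).comp continuous_subtype_val) fun ω => ?_
    simpa [← sSup_image', image_eq_range] using (hcompact ω).bddAbove
  refine ⟨hmeasSup.aestronglyMeasurable, (lintegral_mono fun ω => ?_).trans_lt hG⟩
  obtain ⟨s, hs, hmax⟩ := (hcompact ω).sSup_mem ((nonempty_Icc.2 hab).image _)
  simpa only [← hmax] using hle ω s hs

lemma exists_lt_measureReal_le {Ω : Type*} [MeasurableSpace Ω] {P : Measure Ω}
    [IsProbabilityMeasure P] {ξ : Ω → ℝ} (hξ : Measurable ξ) {a : ℝ} (ha : a < 1) :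
    ∃ x, a < P.real {ω | ξ ω ≤ x} := by
  have := Measure.isProbabilityMeasure_map (μ := P) hξ.aemeasurable
  obtain ⟨x, hx⟩ := ((tendsto_cdf_atTop (P.map ξ)).eventually (eventually_gt_nhds ha)).exists
  rw [cdf_eq_real, map_measureReal_apply hξ measurableSet_Iic] at hx
  exact ⟨x, hx⟩

lemma gaussianReal_map_sqrt_mul (v : ℝ≥0) :
    (gaussianReal 0 1).map (√(v : ℝ) * ·) = gaussianReal 0 v := by
  rw [gaussianReal_map_const_mul, mul_zero, mul_one]
  congr
  exact Real.sq_sqrt v.coe_nonneg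

lemma lintegral_enorm_rpow_gaussianReal (v : ℝ≥0) {p : ℝ} (hp : 0 ≤ p) :
    ∫⁻ x, ‖x‖ₑ ^ p ∂gaussianReal 0 v =
      (v : ℝ≥0∞) ^ (p / 2) * ∫⁻ x, ‖x‖ₑ ^ p ∂gaussianReal 0 1 := by
  rw [← gaussianReal_map_sqrt_mul, lintegral_map (by fun_prop) (by fun_prop),
    ← lintegral_const_mul' _ _ (ENNReal.rpow_ne_top_of_nonneg (by positivity) ENNReal.coe_ne_top)]
  congr 1 with x
  rw [enorm_mul, ENNReal.mul_rpow_of_nonneg _ _ hp]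
  congr 1
  rw [Real.enorm_eq_ofReal (Real.sqrt_nonneg _), Real.sqrt_eq_rpow,
    ← ENNReal.ofReal_rpow_of_nonneg v.coe_nonneg (by norm_num), ENNReal.ofReal_coe_nnreal,
    ← ENNReal.rpow_mul]
  ring_nf

lemma gaussianReal_Iic_neg_sqrt {v : ℝ≥0} (hv : v ≠ 0) :
    gaussianReal 0 v (Iic (-√(v : ℝ))) = gaussianReal 0 1 (Iic (-1)) := by
  rw [← gaussianReal_map_sqrt_mul, Measure.map_apply (by fun_prop) measurableSet_Iic]
  congr 1
  ext x
  have : 0 < √(v : ℝ) := by positivity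
  simp only [mem_preimage, mem_Iic]
  constructor <;> intro h <;> nlinarith

lemma gaussianReal_Iic_pos (x : ℝ) : 0 < gaussianReal 0 1 (Iic x) := by
  refine pos_iff_ne_zero.2 fun h => ?_
  have := gaussianReal_absolutelyContinuous' 0 one_ne_zero h
  simp at this

namespace IsStandardBM

variable {Ω : Type*} [MeasureSpace Ω] {W : ℝ → Ω → ℝ}

lemma map_eval (hW : IsStandardBM W) {t : ℝ} (ht : 0 ≤ t) :
    (ℙ : Measure Ω).map (W t) = gaussianReal 0 t.toNNReal := by
  obtain ⟨hW0, -, -, hlaw, -⟩ := hW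
  simpa [hW0] using hlaw 0 t le_rfl ht

lemma lintegral_edist_rpow_four (hW : IsStandardBM W) {s u : ℝ} (hs : 0 ≤ s) (hsu : s ≤ u) :
    ∫⁻ ω, edist (W s ω) (W u ω) ^ (4 : ℝ) =
      (∫⁻ x, ‖x‖ₑ ^ (4 : ℝ) ∂gaussianReal 0 1) * edist s u ^ (2 : ℝ) := by
  obtain ⟨-, -, hmeas, hlaw, -⟩ := hW
  have hmeas_sub : Measurable fun ω => W u ω - W s ω := (hmeas u).sub (hmeas s)
  simp_rw [edist_comm (W s _), edist_eq_enorm_sub]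
  rw [← lintegral_map (f := fun x : ℝ => ‖x‖ₑ ^ (4 : ℝ)) (by fun_prop) hmeas_sub, hlaw s u hs hsu,
    lintegral_enorm_rpow_gaussianReal _ (by norm_num), mul_comm, Real.enorm_eq_ofReal_abs,
    abs_sub_comm, abs_of_nonneg (sub_nonneg.2 hsu)]
  norm_num [ENNReal.ofReal]

lemma lintegral_iSup_enorm_lt_top [IsProbabilityMeasure (ℙ : Measure Ω)] (hW : IsStandardBM W)
    {t : ℝ} (ht : 0 < t) : ∫⁻ ω, ⨆ s ∈ Icc 0 t, ‖W s ω‖ₑ < ⊤ := by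
  have hmoment : ∫⁻ x, ‖x‖ₑ ^ (4 : ℝ) ∂gaussianReal 0 1 ≠ ⊤ := by
    have := (eLpNorm_lt_top_iff_lintegral_rpow_enorm_lt_top (by norm_num) (by norm_num)).1
      (memLp_id_gaussianReal (μ := 0) (v := 1) 4).eLpNorm_lt_top
    simpa using this.ne
  have := lintegral_iSup_edist_lt_top (P := ℙ) (X := W) (by norm_num)
    (by norm_num : (1 : ℝ) < 2) hmoment hW.2.1
    (fun s u => ((hW.2.2.1 s).edist (hW.2.2.1 u)).aemeasurable)
    (fun s u hs hsu => (hW.lintegral_edist_rpow_four hs hsu).le) ht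
  simpa only [hW.1, edist_zero_left, enorm_eq_nnnorm] using this

lemma measure_le_neg_sqrt (hW : IsStandardBM W) {t : ℝ} (ht : 0 < t) :
    ℙ {ω | W t ω ≤ -√t} = gaussianReal 0 1 (Iic (-1)) := by
  rw [← gaussianReal_Iic_neg_sqrt (v := t.toNNReal) (by simpa using ht),
    Real.coe_toNNReal _ ht.le, ← hW.map_eval ht.le,
    Measure.map_apply (hW.2.2.1 t) measurableSet_Iic]
  rfl

end IsStandardBM

section Reflection

variable {Ω : Type*} {ξ : Ω → ℝ} {W : ℝ → Ω → ℝ}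

noncomputable def skorokhodReflection (ξ : Ω → ℝ) (W : ℝ → Ω → ℝ) (t : ℝ) (ω : Ω) : ℝ :=
  sSup ((fun s => max (-(ξ ω + W s ω)) 0) '' Icc 0 t)

lemma max_neg_le_skorokhodReflection {ω : Ω} (hW : Continuous (W · ω)) {t s : ℝ}
    (hs : s ∈ Icc 0 t) : max (-(ξ ω + W s ω)) 0 ≤ skorokhodReflection ξ W t ω :=
  le_csSup (isCompact_Icc.image (by fun_prop)).bddAbove (mem_image_of_mem _ hs)

variable [MeasureSpace Ω] [IsProbabilityMeasure (ℙ : Measure Ω)]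

lemma integrable_skorokhodReflection (hξmeas : Measurable ξ) (hξnn : ∀ ω, 0 ≤ ξ ω)
    (hW : IsStandardBM W) {t : ℝ} (ht : 0 < t) : Integrable (skorokhodReflection ξ W t) := by
  refine integrable_sSup_image_Icc (Y := fun s ω => max (-(ξ ω + W s ω)) 0)
    (fun s => (hξmeas.add (hW.2.2.1 s)).neg.max measurable_const)
    (fun ω => by have := hW.2.1 ω; fun_prop) ht.le (hW.lintegral_iSup_enorm_lt_top ht)
    fun ω s hs => le_trans ?_ (le_iSup₂ (f := fun s _ => ‖W s ω‖ₑ) s hs)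
  rw [Real.enorm_eq_ofReal (le_max_right _ _), Real.enorm_eq_ofReal_abs]
  exact ENNReal.ofReal_le_ofReal
    (max_le (by linarith [hξnn ω, neg_abs_le (W s ω)]) (abs_nonneg _))

lemma sub_mul_le_integral_skorokhodReflection (hξmeas : Measurable ξ) (hξnn : ∀ ω, 0 ≤ ξ ω)
    (hW : IsStandardBM W) (hindep : IndepFun ξ (fun ω t => W t ω) ℙ) {t x : ℝ} (ht : 0 < t)
    (hx : x ≤ √t) :
    (√t - x) * ((ℙ : Measure Ω).real {ω | ξ ω ≤ x} * (gaussianReal 0 1).real (Iic (-1))) ≤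
      ∫ ω, skorokhodReflection ξ W t ω := by
  have hmem : t ∈ Icc 0 t := right_mem_Icc.2 ht.le
  have hprod : (ℙ : Measure Ω).real ({ω | ξ ω ≤ x} ∩ {ω | W t ω ≤ -√t}) =
      (ℙ : Measure Ω).real {ω | ξ ω ≤ x} * (gaussianReal 0 1).real (Iic (-1)) := by
    rw [measureReal_def, measureReal_def, measureReal_def, ← hW.measure_le_neg_sqrt ht,
      ← ENNReal.toReal_mul]
    exact congrArg _ ((hindep.comp measurable_id (measurable_pi_apply t))
      |>.measure_inter_preimage_eq_mul _ _ measurableSet_Iic measurableSet_Iic)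
  have hsub : {ω | ξ ω ≤ x} ∩ {ω | W t ω ≤ -√t} ⊆
      {ω | √t - x ≤ skorokhodReflection ξ W t ω} := by
    rintro ω ⟨hξ, hWt⟩
    refine (le_max_of_le_left ?_).trans (max_neg_le_skorokhodReflection (hW.2.1 ω) hmem)
    simp only [mem_ofPred_eq] at hξ hWt
    linarith
  rw [← hprod]
  calc _ ≤ (√t - x) * (ℙ : Measure Ω).real {ω | √t - x ≤ skorokhodReflection ξ W t ω} :=
        mul_le_mul_of_nonneg_left (measureReal_mono hsub) (sub_nonneg.2 hx)
    _ ≤ _ := mul_meas_ge_le_integral_of_nonneg (ae_of_all _ fun ω =>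
        (le_max_right _ _).trans (max_neg_le_skorokhodReflection (hW.2.1 ω) hmem))
        (integrable_skorokhodReflection hξmeas hξnn hW ht) _

end Reflection

/-- The expected reflection term `f t = E[sup_{0 ≤ s ≤ t} (ξ + W s)⁻]` of reflected
Brownian motion started from a nonnegative random variable `ξ` grows at least like a
square root: `f t ≥ C √(t − t₀)` for all `t ≥ t₀`, for some `t₀ > 0` and `C > 0`. -/
theorem expected_reflection_sqrt_lower_bound {Ω : Type*} [MeasureSpace Ω]
    [IsProbabilityMeasure (ℙ : Measure Ω)]
    (ξ : Ω → ℝ) (hξmeas : Measurable ξ) (hξnn : ∀ ω, 0 ≤ ξ ω)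
    (W : ℝ → Ω → ℝ) (hW : IsStandardBM W)
    (hindep : IndepFun ξ (fun ω => fun t => W t ω) (ℙ : Measure Ω))
    (L : ℝ → Ω → ℝ)
    (hL : ∀ t : ℝ, 0 ≤ t → ∀ ω, L t ω =
      sSup ((fun s => max (-(ξ ω + W s ω)) 0) '' Set.Icc 0 t))
    (f : ℝ → ℝ) (hf : ∀ t : ℝ, 0 ≤ t → f t = ∫ ω, L t ω) :
    ∃ t₀ > (0 : ℝ), ∃ C > (0 : ℝ), ∀ t ≥ t₀, C * Real.sqrt (t - t₀) ≤ f t := by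
  obtain ⟨x₀, hx₀⟩ := exists_lt_measureReal_le (P := ℙ) hξmeas (by norm_num : (1 / 2 : ℝ) < 1)
  set c := (gaussianReal 0 1).real (Iic (-1))
  have hc : 0 < c := ENNReal.toReal_pos (gaussianReal_Iic_pos _).ne' (measure_ne_top _ _)
  refine ⟨4 * x₀ ^ 2 + 1, by positivity, c / 4, by positivity, fun t ht => ?_⟩
  have htpos : 0 < t := by nlinarith [sq_nonneg x₀]
  have hx₀t : 2 * x₀ ≤ √t := (le_abs_self _).trans (Real.abs_le_sqrt (by nlinarith))
  have hsqrt : √(t - (4 * x₀ ^ 2 + 1)) ≤ √t := Real.sqrt_le_sqrt (by nlinarith [sq_nonneg x₀])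
  have hsqrt_nonneg := Real.sqrt_nonneg t
  rw [hf t htpos.le]
  simp_rw [hL t htpos.le]
  calc c / 4 * √(t - (4 * x₀ ^ 2 + 1)) ≤ (√t - x₀) * (1 / 2 * c) := by nlinarith
    _ ≤ (√t - x₀) * ((ℙ : Measure Ω).real {ω | ξ ω ≤ x₀} * c) := by gcongr; linarith
    _ ≤ _ := sub_mul_le_integral_skorokhodReflection hξmeas hξnn hW hindep htpos (by linarith)
end

section
/- Let α ∈ [0, 1). There exists a probability density on [0, ∞) of the form f(x) = c_α exp(−c_α α x − x²/2) for x ≥ 0 (and 0 for x < 0), where c_α > 0 is the unique constant making f integrate to 1. Moreover, the mean of this distribution equals c_α (1 − α); that is, ∫_0^∞ x c_α exp(−c_α α x − x²/2) dx = c_α(1 − α). -/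
/-!
Write `R(a) = ∫₀^∞ exp(-a x - x²/2) dx`, so the mass is `I(c) = c R(cα)`. The substitution
`u = c x` gives `I(c) = ∫₀^∞ exp(-α u - u²/(2c²)) du`, strictly increasing in `c` and tending to
`1/α > 1` (or `∞`) as `c → ∞`; since `I(0) = 0` and `I` is continuous, there is exactly one root of
`I(c) = 1`. Integrating `d/dx exp(-a x - x²/2) = -(a + x) exp(-a x - x²/2)` over `(0, ∞)` gives
`∫₀^∞ x exp(-a x - x²/2) dx = 1 - a R(a)`, which at `a = cα`, `c R(cα) = 1` is the mean identity.
-/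

open Set MeasureTheory Filter Topology Real

lemma setIntegral_lt_setIntegral_of_forall_lt {X : Type*} [MeasurableSpace X] {μ : Measure X}
    {s : Set X} {f g : X → ℝ} (hs : MeasurableSet s) (hμs : μ s ≠ 0)
    (hf : IntegrableOn f s μ) (hg : IntegrableOn g s μ) (hfg : ∀ x ∈ s, f x < g x) :
    ∫ x in s, f x ∂μ < ∫ x in s, g x ∂μ := by
  rw [← sub_pos, ← integral_sub hg hf]
  refine (integral_pos_iff_support_of_nonneg_ae ?_ (hg.sub hf)).2 ?_
  · filter_upwards [ae_restrict_mem hs] with x hx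
    exact sub_nonneg.2 (hfg x hx).le
  · have hsupp : Function.support (g - f) ∩ s = s :=
      inter_eq_right.2 fun x hx => (sub_pos.2 (hfg x hx)).ne'
    rwa [Measure.restrict_apply' hs, hsupp, pos_iff_ne_zero]

section GaussianBounds

variable {a b x : ℝ}

lemma exp_neg_mul_sub_sq_div_le (ha : 0 ≤ a) (hx : 0 ≤ x) :
    exp (-(a * x) - x ^ 2 / b) ≤ exp (-b⁻¹ * x ^ 2) := by
  rw [exp_le_exp, neg_mul, ← div_eq_inv_mul]
  linarith [mul_nonneg ha hx]

lemma integrableOn_exp_neg_mul_sub_sq_div (ha : 0 ≤ a) (hb : 0 < b) :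
    IntegrableOn (fun x => exp (-(a * x) - x ^ 2 / b)) (Ioi 0) := by
  refine (integrable_exp_neg_mul_sq (inv_pos.2 hb)).integrableOn.mono'
    (by fun_prop) ?_
  filter_upwards [ae_restrict_mem measurableSet_Ioi] with x hx
  rw [norm_of_nonneg (exp_pos _).le]
  exact exp_neg_mul_sub_sq_div_le ha hx.le

lemma integrableOn_mul_exp_neg_mul_sub_sq_div (ha : 0 ≤ a) (hb : 0 < b) :
    IntegrableOn (fun x => x * exp (-(a * x) - x ^ 2 / b)) (Ioi 0) := by
  refine (integrable_mul_exp_neg_mul_sq (inv_pos.2 hb)).integrableOn.mono'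
    (by fun_prop) ?_
  filter_upwards [ae_restrict_mem measurableSet_Ioi] with x hx
  rw [norm_mul, norm_of_nonneg hx.le, norm_of_nonneg (exp_pos _).le]
  exact mul_le_mul_of_nonneg_left (exp_neg_mul_sub_sq_div_le ha hx.le) hx.le

end GaussianBounds

/-- `∫₀^∞ exp(-a x - x²/2) dx = exp(a²/2) ∫ₐ^∞ exp(-t²/2) dt` is the Mills ratio of `a`. -/
noncomputable def millsRatio (a : ℝ) : ℝ :=
  ∫ x in Ioi 0, exp (-(a * x) - x ^ 2 / 2)

lemma antitoneOn_millsRatio : AntitoneOn millsRatio (Ici 0) := by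
  intro a ha b hb hab
  refine setIntegral_mono_on (integrableOn_exp_neg_mul_sub_sq_div hb two_pos)
    (integrableOn_exp_neg_mul_sub_sq_div ha two_pos) measurableSet_Ioi fun x hx => ?_
  gcongr
  exact hx.le

lemma continuousOn_millsRatio : ContinuousOn millsRatio (Ici 0) := by
  refine continuousOn_of_dominated (fun a _ => by fun_prop) (fun a ha => ?_)
    (integrable_exp_neg_mul_sq (inv_pos.2 two_pos)).integrableOn (ae_of_all _ fun x => by fun_prop)
  filter_upwards [ae_restrict_mem measurableSet_Ioi] with x hx
  rw [norm_of_nonneg (exp_pos _).le]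
  exact exp_neg_mul_sub_sq_div_le ha hx.le

lemma integral_mul_exp_neg_mul_sub_sq_div_two {a : ℝ} (ha : 0 ≤ a) :
    ∫ x in Ioi 0, x * exp (-(a * x) - x ^ 2 / 2) = 1 - a * millsRatio a := by
  set g : ℝ → ℝ := fun x => exp (-(a * x) - x ^ 2 / 2)
  have hg : IntegrableOn g (Ioi 0) := integrableOn_exp_neg_mul_sub_sq_div ha two_pos
  have hxg : IntegrableOn (fun x => x * g x) (Ioi 0) :=
    integrableOn_mul_exp_neg_mul_sub_sq_div ha two_pos
  have hderiv : ∀ x ∈ Ici (0 : ℝ), HasDerivAt g (-(a * g x + x * g x)) x := by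
    intro x _
    have hexponent : HasDerivAt (fun x => -(a * x) - x ^ 2 / 2) (-a - x) x := by
      simpa using
        ((hasDerivAt_id x).const_mul a).fun_neg.fun_sub ((hasDerivAt_pow 2 x).div_const 2)
    convert hexponent.exp using 1
    ring
  have hlim : Tendsto g atTop (𝓝 0) := by
    refine tendsto_exp_atBot.comp (tendsto_atBot_mono' atTop ?_ tendsto_neg_atTop_atBot)
    filter_upwards [eventually_ge_atTop 2] with x hx
    nlinarith [mul_nonneg ha (by linarith : (0 : ℝ) ≤ x)]
  have hFTC := integral_Ioi_of_hasDerivAt_of_tendsto' hderiv ((hg.const_mul a).add hxg).neg hlim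
  have hg0 : g 0 = 1 := by simp [g]
  rw [integral_neg, integral_add (hg.const_mul a) hxg, integral_const_mul, hg0, zero_sub,
    neg_inj] at hFTC
  rw [millsRatio]
  linarith

noncomputable def profileMass (α c : ℝ) : ℝ :=
  ∫ x in Ioi 0, c * exp (-(c * α * x) - x ^ 2 / 2)

section ProfileMass

variable {α c : ℝ}

lemma profileMass_eq_mul_millsRatio (α c : ℝ) : profileMass α c = c * millsRatio (c * α) :=
  integral_const_mul _ _

lemma profileMass_eq_integral_rescaled (α : ℝ) (hc : 0 < c) :
    profileMass α c = ∫ u in Ioi 0, exp (-(α * u) - u ^ 2 / (2 * c ^ 2)) := by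
  have h := integral_comp_mul_left_Ioi (fun u => exp (-(α * u) - u ^ 2 / (2 * c ^ 2))) 0 hc
  rw [mul_zero, smul_eq_mul] at h
  rw [profileMass, integral_const_mul, ← eq_inv_mul_iff_mul_eq₀ hc.ne', ← h]
  refine setIntegral_congr_fun measurableSet_Ioi fun x _ => ?_
  field_simp

lemma strictMonoOn_profileMass (hα : 0 ≤ α) : StrictMonoOn (profileMass α) (Ioi 0) := by
  intro c₁ hc₁ c₂ hc₂ h
  rw [mem_Ioi] at hc₁ hc₂
  rw [profileMass_eq_integral_rescaled α hc₁, profileMass_eq_integral_rescaled α hc₂]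
  refine setIntegral_lt_setIntegral_of_forall_lt measurableSet_Ioi (by simp)
    (integrableOn_exp_neg_mul_sub_sq_div hα (by positivity))
    (integrableOn_exp_neg_mul_sub_sq_div hα (by positivity)) fun u hu => ?_
  have : 0 < u := hu
  gcongr

lemma continuousOn_profileMass (hα : 0 ≤ α) : ContinuousOn (profileMass α) (Ici 0) := by
  simp_rw [funext (profileMass_eq_mul_millsRatio α)]
  exact continuousOn_id.mul (continuousOn_millsRatio.comp (by fun_prop)
    fun c hc => mul_nonneg hc hα)

lemma tendsto_profileMass_atTop (hα : 0 < α) : Tendsto (profileMass α) atTop (𝓝 α⁻¹) := by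
  have hlim : ∫ u in Ioi 0, exp (-(α * u)) = α⁻¹ := by
    simpa [neg_mul] using integral_exp_mul_Ioi (neg_neg_of_pos hα) 0
  rw [← hlim]
  have hbound : IntegrableOn (fun u => exp (-(α * u))) (Ioi 0) := by
    simpa only [neg_mul] using exp_neg_integrableOn_Ioi 0 hα
  refine (tendsto_integral_filter_of_dominated_convergence
    (F := fun c u => exp (-(α * u) - u ^ 2 / (2 * c ^ 2))) (fun u => exp (-(α * u)))
    (Eventually.of_forall fun c => by fun_prop) (Eventually.of_forall fun c => ?_)
    hbound (ae_of_all _ fun u => ?_)).congr' ?_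
  · refine ae_of_all _ fun u => ?_
    rw [norm_of_nonneg (exp_pos _).le, exp_le_exp]
    linarith [div_nonneg (sq_nonneg u) (mul_nonneg zero_le_two (sq_nonneg c))]
  · have : Tendsto (fun c : ℝ => u ^ 2 / (2 * c ^ 2)) atTop (𝓝 0) :=
      tendsto_const_nhds.div_atTop ((tendsto_pow_atTop two_ne_zero).const_mul_atTop two_pos)
    simpa using (tendsto_const_nhds.sub this).rexp
  · filter_upwards [eventually_gt_atTop 0] with c hc
    exact (profileMass_eq_integral_rescaled α hc).symm

lemma exists_one_lt_profileMass (hα0 : 0 ≤ α) (hα1 : α < 1) :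
    ∃ c, 0 ≤ c ∧ 1 < profileMass α c := by
  -- compare with `β > 0`, since for `α = 0` the limit `α⁻¹` is the junk value `0`
  set β := (1 + α) / 2 with hβ_def
  have hβ : 0 < β := by positivity
  have hβ1 : 1 < β⁻¹ := (one_lt_inv₀ hβ).2 (by linarith [hβ_def])
  obtain ⟨c, hβc, hc⟩ := (((tendsto_profileMass_atTop hβ).eventually (lt_mem_nhds hβ1)).and
    (eventually_ge_atTop 0)).exists
  refine ⟨c, hc, hβc.trans_le ?_⟩
  rw [profileMass_eq_mul_millsRatio, profileMass_eq_mul_millsRatio]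
  exact mul_le_mul_of_nonneg_left (antitoneOn_millsRatio (mul_nonneg hc hα0)
    (mul_nonneg hc hβ.le) (by gcongr; linarith [hβ_def])) hc

end ProfileMass

/-- For `α ∈ [0, 1)` there is a unique constant `c_α > 0` making
`x ↦ c_α exp(−c_α α x − x²/2)` a probability density on `(0, ∞)`, and the mean of the
resulting distribution equals `c_α (1 − α)`. -/
theorem self_similar_profile_density (α : ℝ) (hα0 : 0 ≤ α) (hα1 : α < 1) :
    (∃! c : ℝ, 0 < c ∧
      (∫ x in Set.Ioi (0 : ℝ), c * Real.exp (-(c * α * x) - x ^ 2 / 2)) = 1) ∧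
    (∀ c : ℝ, 0 < c →
      (∫ x in Set.Ioi (0 : ℝ), c * Real.exp (-(c * α * x) - x ^ 2 / 2)) = 1 →
      (∫ x in Set.Ioi (0 : ℝ), x * (c * Real.exp (-(c * α * x) - x ^ 2 / 2))) =
        c * (1 - α)) := by
  refine ⟨?_, fun c hc hmass => ?_⟩
  · obtain ⟨b, hb0, hb⟩ := exists_one_lt_profileMass hα0 hα1
    obtain ⟨c, hc0, hc⟩ := isPreconnected_Ici.intermediate_value self_mem_Ici hb0
      (continuousOn_profileMass hα0) ⟨by simp [profileMass], hb.le⟩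
    have hc_pos : 0 < c := lt_of_le_of_ne hc0 (by rintro rfl; simp [profileMass] at hc)
    exact ⟨c, ⟨hc_pos, hc⟩, fun c' hc' =>
      (strictMonoOn_profileMass hα0).injOn hc'.1 hc_pos (hc'.2.trans hc.symm)⟩
  · have hR : c * millsRatio (c * α) = 1 := (profileMass_eq_mul_millsRatio α c).symm.trans hmass
    calc ∫ x in Ioi 0, x * (c * exp (-(c * α * x) - x ^ 2 / 2))
        = c * ∫ x in Ioi 0, x * exp (-(c * α * x) - x ^ 2 / 2) := by
          simp_rw [mul_left_comm _ c]; exact integral_const_mul _ _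
      _ = c * (1 - α) := by
          rw [integral_mul_exp_neg_mul_sub_sq_div_two (by positivity)]
          linear_combination (-(c * α)) * hR
end

section
/- For α ∈ (0, 1) let γ_α ∈ (0, ∞) be the unique constant such that the density g_α(x) = γ_α exp(−γ_α α x − γ_α(1 − α) x²/2) on [0, ∞) has unit mean (∫_0^∞ x g_α(x) dx = 1). Then γ_α ≤ 1 for all α ∈ (0, 1). Moreover lim_{α → 1⁻} γ_α = 1 and lim_{α → 0⁺} γ_α = 2/π. -/
/-!
Writing the exponent as `α · (-γx) + (1 - α) · (-γx²/2)`, convexity of `exp` bounds `g_α` by the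
mixture `αγ e^{-γx} + (1 - α)γ e^{-γx²/2}` of an exponential and a half-Gaussian density.
Integrating this bound against `x` and against `1` gives `1 ≤ α/γ + 1 - α`, i.e. `γ ≤ 1`, and
`1 ≤ α + (1 - α)√(πγ/2)`, i.e. `γ ≥ 2/π`. In the other direction, `e^{-y} ≥ 1 - y` applied to the
linear factor of `g_α` gives `√(πγ/2) - γα ≤ 1`, hence `γ ≤ 2(1 + α)²/π`, and applied to the
quadratic factor it gives `γα² - 3(1 - α) ≤ γ²α⁴`, hence `γ ≥ α² - (3π/2)(1 - α)`. Both limits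
follow by squeezing.
-/

open Set Filter MeasureTheory Real Topology
open scoped Nat

section HalfLineIntegrals

variable {c : ℝ}

theorem integral_pow_mul_exp_neg_mul_Ioi (k : ℕ) (hc : 0 < c) :
    ∫ x in Ioi (0 : ℝ), x ^ k * exp (-(c * x)) = k ! / c ^ (k + 1) := by
  have key := integral_rpow_mul_exp_neg_mul_Ioi (a := k + 1) (by positivity) hc
  simp_rw [add_sub_cancel_right, rpow_natCast, Gamma_nat_eq_factorial, one_div,
    inv_rpow hc.le, ← Nat.cast_succ, rpow_natCast] at key
  rw [key, div_eq_inv_mul]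

theorem integrableOn_pow_mul_exp_neg_mul_Ioi (k : ℕ) (hc : 0 < c) :
    IntegrableOn (fun x => x ^ k * exp (-(c * x))) (Ioi 0) :=
  .of_integral_ne_zero (by rw [integral_pow_mul_exp_neg_mul_Ioi k hc]; positivity)

theorem integral_mul_exp_neg_mul_sq_Ioi (hc : 0 < c) :
    ∫ x in Ioi (0 : ℝ), x * exp (-c * x ^ 2) = (2 * c)⁻¹ := by
  have key := integral_rpow_mul_exp_neg_mul_rpow (p := 2) (q := 1) two_pos (by norm_num) hc
  norm_num [rpow_two, rpow_neg_one] at key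
  simp only [neg_mul, key]
  ring

theorem mul_integral_gaussian_half_Ioi (hc : 0 < c) :
    c * ∫ x in Ioi (0 : ℝ), exp (-(c / 2) * x ^ 2) = √(π * c / 2) := by
  rw [integral_gaussian_Ioi]
  calc c * (√(π / (c / 2)) / 2) = √((c / 2) ^ 2) * √(π / (c / 2)) := by
        rw [sqrt_sq (by positivity)]; ring
    _ = √(π * c / 2) := by
        rw [← sqrt_mul (by positivity)]; congr 1; field_simp

end HalfLineIntegrals

/-- The density `g_α`, with `α` written `a` and `γ_α` replaced by a free parameter `g`. -/
noncomputable def selfSimilarProfile (g a x : ℝ) : ℝ :=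
  g * exp (-(g * a * x) - g * (1 - a) * x ^ 2 / 2)

section SelfSimilarProfile

variable {g a : ℝ}

theorem selfSimilarProfile_nonneg (hg : 0 ≤ g) (a x : ℝ) : 0 ≤ selfSimilarProfile g a x := by
  unfold selfSimilarProfile; positivity

theorem continuous_selfSimilarProfile (g a : ℝ) : Continuous (selfSimilarProfile g a) := by
  unfold selfSimilarProfile; fun_prop

theorem selfSimilarProfile_le_mixture (hg : 0 ≤ g) (ha0 : 0 ≤ a) (ha1 : a ≤ 1) (x : ℝ) :
    selfSimilarProfile g a x ≤ a * g * exp (-(g * x)) + (1 - a) * g * exp (-(g / 2) * x ^ 2) := by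
  have h := convexOn_exp.2 (mem_univ (-(g * x))) (mem_univ (-(g / 2) * x ^ 2))
    ha0 (sub_nonneg.2 ha1) (by ring)
  simp only [smul_eq_mul] at h
  calc selfSimilarProfile g a x
      = g * exp (a * -(g * x) + (1 - a) * (-(g / 2) * x ^ 2)) := by
        unfold selfSimilarProfile; ring_nf
    _ ≤ g * (a * exp (-(g * x)) + (1 - a) * exp (-(g / 2) * x ^ 2)) := by gcongr
    _ = _ := by ring

theorem integrableOn_selfSimilarProfile (hg : 0 < g) (ha0 : 0 ≤ a) (ha1 : a ≤ 1) :
    IntegrableOn (selfSimilarProfile g a) (Ioi 0) := by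
  have hmajorant : IntegrableOn
      (fun x => a * g * exp (-(g * x)) + (1 - a) * g * exp (-(g / 2) * x ^ 2)) (Ioi 0) :=
    IntegrableOn.add
      (by simpa [IntegrableOn] using (integrableOn_pow_mul_exp_neg_mul_Ioi 0 hg).const_mul (a * g))
      ((integrable_exp_neg_mul_sq (half_pos hg)).integrableOn.const_mul ((1 - a) * g))
  refine hmajorant.mono' (continuous_selfSimilarProfile g a).aestronglyMeasurable.restrict
    (ae_of_all _ fun x => ?_)
  rw [norm_of_nonneg (selfSimilarProfile_nonneg hg.le a x)]
  exact selfSimilarProfile_le_mixture hg.le ha0 ha1 x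

theorem integrableOn_mul_selfSimilarProfile (hg : 0 < g) (ha0 : 0 ≤ a) (ha1 : a ≤ 1) :
    IntegrableOn (fun x => x * selfSimilarProfile g a x) (Ioi 0) := by
  have hmajorant : IntegrableOn (fun x =>
      a * g * (x * exp (-(g * x))) + (1 - a) * g * (x * exp (-(g / 2) * x ^ 2))) (Ioi 0) :=
    IntegrableOn.add
      (by simpa [IntegrableOn] using (integrableOn_pow_mul_exp_neg_mul_Ioi 1 hg).const_mul (a * g))
      ((integrable_mul_exp_neg_mul_sq (half_pos hg)).integrableOn.const_mul ((1 - a) * g))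
  refine hmajorant.mono'
    (continuous_id.mul (continuous_selfSimilarProfile g a)).aestronglyMeasurable.restrict
    ((ae_restrict_mem measurableSet_Ioi).mono fun x (hx : 0 < x) => ?_)
  rw [norm_of_nonneg (mul_nonneg hx.le (selfSimilarProfile_nonneg hg.le a x))]
  have := mul_le_mul_of_nonneg_left (selfSimilarProfile_le_mixture hg.le ha0 ha1 x) hx.le
  linarith

theorem integral_selfSimilarProfile_le (hg : 0 < g) (ha0 : 0 ≤ a) (ha1 : a ≤ 1) :
    ∫ x in Ioi 0, selfSimilarProfile g a x ≤ a + (1 - a) * √(π * g / 2) := by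
  have hexp : IntegrableOn (fun x => exp (-(g * x))) (Ioi 0) := by
    simpa using integrableOn_pow_mul_exp_neg_mul_Ioi 0 hg
  have hgauss := (integrable_exp_neg_mul_sq (half_pos hg)).integrableOn (s := Ioi 0)
  calc ∫ x in Ioi 0, selfSimilarProfile g a x
      ≤ ∫ x in Ioi 0, a * g * exp (-(g * x)) + (1 - a) * g * exp (-(g / 2) * x ^ 2) :=
        setIntegral_mono_on (integrableOn_selfSimilarProfile hg ha0 ha1)
          ((hexp.const_mul _).add (hgauss.const_mul _)) measurableSet_Ioi
          fun x _ => selfSimilarProfile_le_mixture hg.le ha0 ha1 x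
    _ = a * g * g⁻¹ + (1 - a) * √(π * g / 2) := by
        have hexp_eq : ∫ x in Ioi 0, exp (-(g * x)) = g⁻¹ := by
          simpa using integral_pow_mul_exp_neg_mul_Ioi 0 hg
        rw [integral_add (hexp.const_mul _) (hgauss.const_mul _), integral_const_mul,
          integral_const_mul, hexp_eq, mul_assoc (1 - a), mul_integral_gaussian_half_Ioi hg]
    _ = a + (1 - a) * √(π * g / 2) := by field_simp

theorem integral_mul_selfSimilarProfile_le (hg : 0 < g) (ha0 : 0 ≤ a) (ha1 : a ≤ 1) :
    ∫ x in Ioi 0, x * selfSimilarProfile g a x ≤ a / g + (1 - a) := by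
  have hexp : IntegrableOn (fun x => x * exp (-(g * x))) (Ioi 0) := by
    simpa using integrableOn_pow_mul_exp_neg_mul_Ioi 1 hg
  have hgauss := (integrable_mul_exp_neg_mul_sq (half_pos hg)).integrableOn (s := Ioi 0)
  calc ∫ x in Ioi 0, x * selfSimilarProfile g a x
      ≤ ∫ x in Ioi 0,
          a * g * (x * exp (-(g * x))) + (1 - a) * g * (x * exp (-(g / 2) * x ^ 2)) :=
        setIntegral_mono_on (integrableOn_mul_selfSimilarProfile hg ha0 ha1)
          ((hexp.const_mul _).add (hgauss.const_mul _)) measurableSet_Ioi fun x (hx : 0 < x) => by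
            have := mul_le_mul_of_nonneg_left (selfSimilarProfile_le_mixture hg.le ha0 ha1 x) hx.le
            linarith
    _ = a * g * (g ^ 2)⁻¹ + (1 - a) * g * (2 * (g / 2))⁻¹ := by
        have hexp_eq : ∫ x in Ioi 0, x * exp (-(g * x)) = (g ^ 2)⁻¹ := by
          simpa using integral_pow_mul_exp_neg_mul_Ioi 1 hg
        rw [integral_add (hexp.const_mul _) (hgauss.const_mul _), integral_const_mul,
          integral_const_mul, integral_mul_exp_neg_mul_sq_Ioi (half_pos hg), hexp_eq]
    _ = a / g + (1 - a) := by field_simp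

theorem sqrt_sub_le_integral_selfSimilarProfile (hg : 0 < g) (ha0 : 0 ≤ a) (ha1 : a ≤ 1) :
    √(π * g / 2) - g * a ≤ ∫ x in Ioi 0, selfSimilarProfile g a x := by
  have hgauss := (integrable_exp_neg_mul_sq (half_pos hg)).integrableOn (s := Ioi 0)
  have hxgauss := (integrable_mul_exp_neg_mul_sq (half_pos hg)).integrableOn (s := Ioi 0)
  calc √(π * g / 2) - g * a
      = g * (∫ x in Ioi 0, exp (-(g / 2) * x ^ 2)) - g ^ 2 * a * (2 * (g / 2))⁻¹ := by
        rw [mul_integral_gaussian_half_Ioi hg]; field_simp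
    _ = ∫ x in Ioi 0, g * exp (-(g / 2) * x ^ 2) - g ^ 2 * a * (x * exp (-(g / 2) * x ^ 2)) := by
        rw [integral_sub (hgauss.const_mul _) (hxgauss.const_mul _), integral_const_mul,
          integral_const_mul, integral_mul_exp_neg_mul_sq_Ioi (half_pos hg)]
    _ ≤ ∫ x in Ioi 0, selfSimilarProfile g a x :=
        setIntegral_mono_on ((hgauss.const_mul _).sub (hxgauss.const_mul _))
          (integrableOn_selfSimilarProfile hg ha0 ha1) measurableSet_Ioi fun x _ => by
            have htangent : 1 - g * a * x ≤ exp (-(g * a * x)) := by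
              linarith [add_one_le_exp (-(g * a * x))]
            have hgauss_le : exp (-(g / 2) * x ^ 2) ≤ exp (-(g * (1 - a) * x ^ 2 / 2)) :=
              exp_le_exp.2 (by nlinarith [mul_nonneg (mul_nonneg hg.le ha0) (sq_nonneg x)])
            calc g * exp (-(g / 2) * x ^ 2) - g ^ 2 * a * (x * exp (-(g / 2) * x ^ 2))
                = g * ((1 - g * a * x) * exp (-(g / 2) * x ^ 2)) := by ring
              _ ≤ g * (exp (-(g * a * x)) * exp (-(g * (1 - a) * x ^ 2 / 2))) :=
                mul_le_mul_of_nonneg_left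
                  (mul_le_mul htangent hgauss_le (exp_pos _).le (exp_pos _).le) hg.le
              _ = selfSimilarProfile g a x := by
                rw [selfSimilarProfile, ← exp_add]; ring_nf

theorem le_integral_mul_selfSimilarProfile (hg : 0 < g) (ha0 : 0 < a) (ha1 : a ≤ 1) :
    1 / (g * a ^ 2) - 3 * (1 - a) / (g ^ 2 * a ^ 4) ≤
      ∫ x in Ioi 0, x * selfSimilarProfile g a x := by
  have hga : 0 < g * a := mul_pos hg ha0
  have hexp1 := integrableOn_pow_mul_exp_neg_mul_Ioi 1 hga
  have hexp3 := integrableOn_pow_mul_exp_neg_mul_Ioi 3 hga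
  calc 1 / (g * a ^ 2) - 3 * (1 - a) / (g ^ 2 * a ^ 4)
      = g * ((1 : ℕ)! / (g * a) ^ (1 + 1))
          - g ^ 2 * (1 - a) / 2 * ((3 : ℕ)! / (g * a) ^ (3 + 1)) := by
        simp only [Nat.factorial]; field_simp; ring
    _ = ∫ x in Ioi 0, g * (x ^ 1 * exp (-(g * a * x)))
          - g ^ 2 * (1 - a) / 2 * (x ^ 3 * exp (-(g * a * x))) := by
        rw [integral_sub (hexp1.const_mul _) (hexp3.const_mul _), integral_const_mul,
          integral_const_mul, integral_pow_mul_exp_neg_mul_Ioi 1 hga,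
          integral_pow_mul_exp_neg_mul_Ioi 3 hga]
    _ ≤ ∫ x in Ioi 0, x * selfSimilarProfile g a x :=
        setIntegral_mono_on ((hexp1.const_mul _).sub (hexp3.const_mul _))
          (integrableOn_mul_selfSimilarProfile hg ha0.le ha1) measurableSet_Ioi
          fun x (hx : 0 < x) => by
            have htangent : 1 - g * (1 - a) * x ^ 2 / 2 ≤ exp (-(g * (1 - a) * x ^ 2 / 2)) := by
              linarith [add_one_le_exp (-(g * (1 - a) * x ^ 2 / 2))]
            calc g * (x ^ 1 * exp (-(g * a * x)))
                  - g ^ 2 * (1 - a) / 2 * (x ^ 3 * exp (-(g * a * x)))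
                = x * g * exp (-(g * a * x)) * (1 - g * (1 - a) * x ^ 2 / 2) := by ring
              _ ≤ x * g * exp (-(g * a * x)) * exp (-(g * (1 - a) * x ^ 2 / 2)) := by
                gcongr
              _ = x * selfSimilarProfile g a x := by
                rw [selfSimilarProfile, mul_assoc, mul_assoc, ← exp_add]; ring_nf

theorem le_one_of_integral_mul_selfSimilarProfile_eq_one (hg : 0 < g) (ha0 : 0 < a) (ha1 : a ≤ 1)
    (hmean : ∫ x in Ioi 0, x * selfSimilarProfile g a x = 1) : g ≤ 1 := by
  have h := hmean ▸ integral_mul_selfSimilarProfile_le hg ha0.le ha1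
  have : a ≤ a / g := by linarith
  rw [le_div_iff₀ hg] at this
  nlinarith

theorem two_div_pi_le_of_integral_selfSimilarProfile_eq_one (hg : 0 < g) (ha0 : 0 ≤ a)
    (ha1 : a < 1) (hnorm : ∫ x in Ioi 0, selfSimilarProfile g a x = 1) : 2 / π ≤ g := by
  have h := hnorm ▸ integral_selfSimilarProfile_le hg ha0 ha1.le
  have : 1 ≤ √(π * g / 2) := by nlinarith
  rw [one_le_sqrt] at this
  rw [div_le_iff₀ pi_pos]
  linarith

theorem le_two_mul_one_add_sq_div_pi_of_integral_selfSimilarProfile_eq_one (hg : 0 < g)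
    (hg1 : g ≤ 1) (ha0 : 0 ≤ a) (ha1 : a ≤ 1)
    (hnorm : ∫ x in Ioi 0, selfSimilarProfile g a x = 1) : g ≤ 2 * (1 + a) ^ 2 / π := by
  have h := hnorm ▸ sqrt_sub_le_integral_selfSimilarProfile hg ha0 ha1
  have : π * g / 2 ≤ (1 + g * a) ^ 2 := (sqrt_le_iff.1 (by linarith)).2
  have : (1 + g * a) ^ 2 ≤ (1 + a) ^ 2 := by gcongr; nlinarith
  rw [le_div_iff₀ pi_pos]
  linarith

theorem sq_sub_le_of_integral_selfSimilarProfile_eq_one (hg : 0 < g) (ha0 : 0 < a)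
    (ha1 : a < 1) (hnorm : ∫ x in Ioi 0, selfSimilarProfile g a x = 1)
    (hmean : ∫ x in Ioi 0, x * selfSimilarProfile g a x = 1) :
    a ^ 2 - 3 * π / 2 * (1 - a) ≤ g := by
  have h := hmean ▸ le_integral_mul_selfSimilarProfile hg ha0 ha1.le
  have hpi := two_div_pi_le_of_integral_selfSimilarProfile_eq_one hg ha0.le ha1 hnorm
  have hpoly : g * a ^ 2 - 3 * (1 - a) ≤ g ^ 2 * a ^ 4 := by
    have e : 1 / (g * a ^ 2) - 3 * (1 - a) / (g ^ 2 * a ^ 4)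
        = (g * a ^ 2 - 3 * (1 - a)) / (g ^ 2 * a ^ 4) := by field_simp
    rwa [e, div_le_one (by positivity)] at h
  have ha4 : a ^ 4 ≤ 1 := pow_le_one₀ ha0.le ha1.le
  have hpi' : 2 ≤ π * g := by rwa [div_le_iff₀ pi_pos, mul_comm] at hpi
  suffices g * a ^ 2 ≤ g * (g + 3 * π / 2 * (1 - a)) by
    linarith [le_of_mul_le_mul_left this hg]
  nlinarith [mul_le_mul_of_nonneg_left ha4 (sq_nonneg g),
    mul_le_mul_of_nonneg_left hpi' (by linarith : (0 : ℝ) ≤ 1 - a)]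

end SelfSimilarProfile

/-- Properties of the normalisation constant `γ_α` of the mean-one self-similar profile
`g_α(x) = γ_α exp(−γ_α α x − γ_α (1 − α) x²/2)` on `(0, ∞)`: `γ_α ≤ 1` for all
`α ∈ (0, 1)`, `γ_α → 1` as `α → 1⁻`, and `γ_α → 2/π` as `α → 0⁺`. -/
theorem gamma_alpha_bounds_and_limits (γ : ℝ → ℝ)
    (hpos : ∀ α ∈ Set.Ioo (0 : ℝ) 1, 0 < γ α)
    (hnorm : ∀ α ∈ Set.Ioo (0 : ℝ) 1,
      (∫ x in Set.Ioi (0 : ℝ),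
        γ α * Real.exp (-(γ α * α * x) - γ α * (1 - α) * x ^ 2 / 2)) = 1)
    (hmean : ∀ α ∈ Set.Ioo (0 : ℝ) 1,
      (∫ x in Set.Ioi (0 : ℝ),
        x * (γ α * Real.exp (-(γ α * α * x) - γ α * (1 - α) * x ^ 2 / 2))) = 1) :
    (∀ α ∈ Set.Ioo (0 : ℝ) 1, γ α ≤ 1) ∧
    Filter.Tendsto γ (nhdsWithin 1 (Set.Ioo (0 : ℝ) 1)) (nhds 1) ∧
    Filter.Tendsto γ (nhdsWithin 0 (Set.Ioo (0 : ℝ) 1)) (nhds (2 / Real.pi)) := by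
  have hle : ∀ α ∈ Ioo (0 : ℝ) 1, γ α ≤ 1 := fun α hα =>
    le_one_of_integral_mul_selfSimilarProfile_eq_one (hpos α hα) hα.1 hα.2.le (hmean α hα)
  refine ⟨hle, ?_, ?_⟩
  · have hlower : Tendsto (fun α : ℝ => α ^ 2 - 3 * π / 2 * (1 - α)) (𝓝[Ioo 0 1] 1) (𝓝 1) := by
      have hcont : Continuous fun α : ℝ => α ^ 2 - 3 * π / 2 * (1 - α) := by fun_prop
      simpa using (hcont.tendsto 1).mono_left (nhdsWithin_le_nhds (s := Ioo 0 1))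
    refine tendsto_of_tendsto_of_tendsto_of_le_of_le' hlower tendsto_const_nhds
      (eventually_nhdsWithin_of_forall fun α hα => ?_) (eventually_nhdsWithin_of_forall hle)
    exact sq_sub_le_of_integral_selfSimilarProfile_eq_one (hpos α hα) hα.1 hα.2
      (hnorm α hα) (hmean α hα)
  · have hupper : Tendsto (fun α : ℝ => 2 * (1 + α) ^ 2 / π) (𝓝[Ioo 0 1] 0) (𝓝 (2 / π)) := by
      have hcont : Continuous fun α : ℝ => 2 * (1 + α) ^ 2 / π := by fun_prop
      simpa using (hcont.tendsto 0).mono_left (nhdsWithin_le_nhds (s := Ioo 0 1))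
    refine tendsto_of_tendsto_of_tendsto_of_le_of_le' tendsto_const_nhds hupper
      (eventually_nhdsWithin_of_forall fun α hα => ?_)
      (eventually_nhdsWithin_of_forall fun α hα => ?_)
    · exact two_div_pi_le_of_integral_selfSimilarProfile_eq_one (hpos α hα) hα.1.le hα.2
        (hnorm α hα)
    · exact le_two_mul_one_add_sq_div_pi_of_integral_selfSimilarProfile_eq_one (hpos α hα)
        (hle α hα) hα.1.le hα.2.le (hnorm α hα)
end

section
/- Let ξ₁, ξ₂ be nonnegative random variables on a common probability space with E[ξ₁] = E[ξ₂] = m > 0, E[ξ₁²] ∨ E[ξ₂²] ≤ 1/ε², and E|ξ₁ − ξ₂| ≥ ε for some ε ∈ (0, 1). Then, setting η = min(ε⁴/(4(1 + 2m)), ε/2), one has P(|ξ₁ − ξ₂| ≥ η and max(ξ₁, ξ₂) ≤ 1/η) ≥ η. -/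
/-! With `Δ = |ξ₁ - ξ₂|`, the part of `E Δ ≥ ε` carried by `{Δ < η}` is at most `η ≤ ε / 2`, so
Cauchy–Schwarz gives `ε / 2 ≤ E[Δ; Δ ≥ η] ≤ ‖Δ‖₂ P(Δ ≥ η)^{1/2}`, i.e. `P(Δ ≥ η) ≥ ε⁴ / 4`.
By Markov, `max(ξ₁, ξ₂) > 1 / η` has probability at most `η E[ξ₁ + ξ₂] = 2 m η`, and `η` is chosen
so that `ε⁴ / 4 - 2 m η ≥ η`. -/

open MeasureTheory

section
variable {α : Type*} [MeasurableSpace α] {μ : Measure α}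

theorem sq_integral_mul_le_integral_sq_mul_integral_sq {f g : α → ℝ}
    (hf0 : 0 ≤ᵐ[μ] f) (hg0 : 0 ≤ᵐ[μ] g) (hf : MemLp f 2 μ) (hg : MemLp g 2 μ) :
    (∫ x, f x * g x ∂μ) ^ 2 ≤ (∫ x, f x ^ 2 ∂μ) * ∫ x, g x ^ 2 ∂μ := by
  have holder := integral_mul_le_Lp_mul_Lq_of_nonneg Real.HolderConjugate.two_two hf0 hg0
    (by simpa using hf) (by simpa using hg)
  simp only [Real.rpow_two, ← Real.sqrt_eq_rpow] at holder
  calc (∫ x, f x * g x ∂μ) ^ 2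
      ≤ (√(∫ x, f x ^ 2 ∂μ) * √(∫ x, g x ^ 2 ∂μ)) ^ 2 :=
        pow_le_pow_left₀ (integral_nonneg_of_ae <| by
          filter_upwards [hf0, hg0] with x hfx hgx using mul_nonneg hfx hgx) holder 2
    _ = (∫ x, f x ^ 2 ∂μ) * ∫ x, g x ^ 2 ∂μ := by
        rw [mul_pow, Real.sq_sqrt (integral_nonneg fun _ => sq_nonneg _),
          Real.sq_sqrt (integral_nonneg fun _ => sq_nonneg _)]

theorem sq_setIntegral_le_integral_sq_mul_measureReal [IsFiniteMeasure μ] {f : α → ℝ}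
    (hf0 : 0 ≤ f) (hf : MemLp f 2 μ) (s : Set α) :
    (∫ x in s, f x ∂μ) ^ 2 ≤ (∫ x, f x ^ 2 ∂μ) * μ.real s := by
  have cs := sq_integral_mul_le_integral_sq_mul_integral_sq (μ := μ.restrict s) (g := 1)
    (.of_forall hf0) (.of_forall fun _ => zero_le_one) (hf.restrict s) (memLp_const 1)
  simp only [Pi.one_apply, mul_one, one_pow, integral_const, smul_eq_mul,
    measureReal_restrict_apply_univ] at cs
  exact cs.trans <| mul_le_mul_of_nonneg_right
    (setIntegral_le_integral hf.integrable_sq (.of_forall fun _ => sq_nonneg _)) measureReal_nonneg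

theorem integral_le_add_setIntegral_setOf_le [IsProbabilityMeasure μ] {f : α → ℝ}
    (hfm : Measurable f) (hf : Integrable f μ) {η : ℝ} (hη : 0 ≤ η) :
    ∫ x, f x ∂μ ≤ η + ∫ x in {x | η ≤ f x}, f x ∂μ := by
  have hs : MeasurableSet {x | η ≤ f x} := measurableSet_le measurable_const hfm
  have hcompl : ∫ x in {x | η ≤ f x}ᶜ, f x ∂μ ≤ η :=
    calc ∫ x in {x | η ≤ f x}ᶜ, f x ∂μ ≤ ∫ x in {x | η ≤ f x}ᶜ, η ∂μ :=
          setIntegral_mono_on hf.integrableOn (integrable_const η).integrableOn hs.compl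
            fun x hx => le_of_lt (not_le.mp hx)
      _ = μ.real {x | η ≤ f x}ᶜ * η := by rw [setIntegral_const, smul_eq_mul]
      _ ≤ η := mul_le_of_le_one_left hη measureReal_le_one
  linarith [integral_add_compl hs hf]

theorem sq_integral_sub_le_integral_sq_mul_measureReal_setOf_le [IsProbabilityMeasure μ]
    {f : α → ℝ} (hf0 : 0 ≤ f) (hfm : Measurable f) (hf : MemLp f 2 μ) {η : ℝ} (hη : 0 ≤ η)
    (hηf : η ≤ ∫ x, f x ∂μ) :
    (∫ x, f x ∂μ - η) ^ 2 ≤ (∫ x, f x ^ 2 ∂μ) * μ.real {x | η ≤ f x} :=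
  calc (∫ x, f x ∂μ - η) ^ 2 ≤ (∫ x in {x | η ≤ f x}, f x ∂μ) ^ 2 := by
        gcongr
        linarith [integral_le_add_setIntegral_setOf_le hfm (hf.integrable one_le_two) hη]
    _ ≤ (∫ x, f x ^ 2 ∂μ) * μ.real {x | η ≤ f x} :=
        sq_setIntegral_le_integral_sq_mul_measureReal hf0 hf _

theorem pow_four_div_four_le_measureReal_setOf_le [IsProbabilityMeasure μ] {f : α → ℝ}
    (hf0 : 0 ≤ f) (hfm : Measurable f) (hf : MemLp f 2 μ) {ε η : ℝ} (hε : 0 < ε)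
    (hη : 0 ≤ η) (hηε : η ≤ ε / 2) (hmean : ε ≤ ∫ x, f x ∂μ)
    (hsq : ∫ x, f x ^ 2 ∂μ ≤ 1 / ε ^ 2) :
    ε ^ 4 / 4 ≤ μ.real {x | η ≤ f x} := by
  have pz := sq_integral_sub_le_integral_sq_mul_measureReal_setOf_le hf0 hfm hf hη (by linarith)
  have hgap : (ε / 2) ^ 2 ≤ (∫ x, f x ∂μ - η) ^ 2 := by gcongr; linarith
  have hP : (ε / 2) ^ 2 ≤ 1 / ε ^ 2 * μ.real {x | η ≤ f x} :=
    hgap.trans (pz.trans (by gcongr))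
  rw [div_mul_eq_mul_div, one_mul, le_div_iff₀ (by positivity)] at hP
  linarith

theorem measureReal_setOf_lt_max_le [IsProbabilityMeasure μ] {X Y : α → ℝ} (hX0 : 0 ≤ X)
    (hY0 : 0 ≤ Y) (hX : Integrable X μ) (hY : Integrable Y μ) {t : ℝ} (ht : 0 < t) :
    μ.real {x | t < max (X x) (Y x)} ≤ (∫ x, X x ∂μ + ∫ x, Y x ∂μ) / t := by
  have markov := mul_meas_ge_le_integral_of_nonneg
    (.of_forall fun x => add_nonneg (hX0 x) (hY0 x)) (hX.add hY) t
  rw [integral_add hX hY] at markov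
  rw [le_div_iff₀ ht, mul_comm]
  refine le_trans (mul_le_mul_of_nonneg_left (measureReal_mono fun x hx => ?_) ht.le) markov
  exact hx.le.trans (max_le (le_add_of_nonneg_right (hY0 x)) (le_add_of_nonneg_left (hX0 x)))
end

theorem coupling_separation_probability_general {Ω : Type*} [MeasureSpace Ω]
    [IsProbabilityMeasure (volume : Measure Ω)]
    (ξ₁ ξ₂ : Ω → ℝ) (h1meas : Measurable ξ₁) (h2meas : Measurable ξ₂)
    (h1nn : ∀ ω, 0 ≤ ξ₁ ω) (h2nn : ∀ ω, 0 ≤ ξ₂ ω)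
    (h1sq : MemLp ξ₁ 2 (volume : Measure Ω)) (h2sq : MemLp ξ₂ 2 (volume : Measure Ω))
    (m ε : ℝ) (hm : 0 < m) (hε0 : 0 < ε)
    (hmean1 : (∫ ω, ξ₁ ω) = m) (hmean2 : (∫ ω, ξ₂ ω) = m)
    (hsqdiff : (∫ ω, |ξ₁ ω - ξ₂ ω| ^ 2) ≤ 1 / ε ^ 2)
    (hdiff : ε ≤ ∫ ω, |ξ₁ ω - ξ₂ ω|) :
    min (ε ^ 4 / (4 * (1 + 2 * m))) (ε / 2) ≤
      ((volume : Measure Ω) {ω |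
        min (ε ^ 4 / (4 * (1 + 2 * m))) (ε / 2) ≤ |ξ₁ ω - ξ₂ ω| ∧
        max (ξ₁ ω) (ξ₂ ω) ≤ 1 / min (ε ^ 4 / (4 * (1 + 2 * m))) (ε / 2)}).toReal := by
  set η := min (ε ^ 4 / (4 * (1 + 2 * m))) (ε / 2)
  have hη : 0 < η := lt_min (by positivity) (by positivity)
  set separated := {ω | η ≤ |ξ₁ ω - ξ₂ ω|}
  set bounded := {ω | max (ξ₁ ω) (ξ₂ ω) ≤ 1 / η}
  have h_separated : ε ^ 4 / 4 ≤ volume.real separated :=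
    pow_four_div_four_le_measureReal_setOf_le (fun _ => abs_nonneg _) (h1meas.sub h2meas).abs
      (by simpa only [Real.norm_eq_abs] using (h1sq.sub h2sq).norm) hε0 hη.le (min_le_right _ _)
      hdiff hsqdiff
  have h_unbounded : volume.real boundedᶜ ≤ 2 * m * η := by
    have markov := measureReal_setOf_lt_max_le h1nn h2nn (h1sq.integrable one_le_two)
      (h2sq.integrable one_le_two) (one_div_pos.mpr hη)
    simp only [hmean1, hmean2, div_div_eq_mul_div, div_one] at markov
    simpa only [bounded, Set.compl_ofPred, not_le, two_mul] using markov
  have h_split :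
      volume.real separated ≤ volume.real (separated ∩ bounded) + volume.real boundedᶜ :=
    (measureReal_mono fun ω hω => (em (ω ∈ bounded)).imp (fun hb => ⟨hω, hb⟩) id).trans
      (measureReal_union_le _ _)
  have h_eta : η * (4 * (1 + 2 * m)) ≤ ε ^ 4 := (le_div_iff₀ (by positivity)).mp (min_le_left _ _)
  show η ≤ volume.real (separated ∩ bounded)
  linarith

/-- Quantitative separation of two coupled nonnegative random variables with common
mean `m > 0`, second moments bounded by `1/ε²` (also for the difference), and
`E|ξ₁ − ξ₂| ≥ ε`: with `η = min(ε⁴/(4(1 + 2m)), ε/2)`, the event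
`{|ξ₁ − ξ₂| ≥ η and max(ξ₁, ξ₂) ≤ 1/η}` has probability at least `η`. -/
theorem coupling_separation_probability {Ω : Type*} [MeasureSpace Ω]
    [IsProbabilityMeasure (volume : Measure Ω)]
    (ξ₁ ξ₂ : Ω → ℝ) (h1meas : Measurable ξ₁) (h2meas : Measurable ξ₂)
    (h1nn : ∀ ω, 0 ≤ ξ₁ ω) (h2nn : ∀ ω, 0 ≤ ξ₂ ω)
    (h1sq : MemLp ξ₁ 2 (volume : Measure Ω)) (h2sq : MemLp ξ₂ 2 (volume : Measure Ω))
    (m ε : ℝ) (hm : 0 < m) (hε0 : 0 < ε) (hε1 : ε < 1)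
    (hmean1 : (∫ ω, ξ₁ ω) = m) (hmean2 : (∫ ω, ξ₂ ω) = m)
    (hsq1 : (∫ ω, ξ₁ ω ^ 2) ≤ 1 / ε ^ 2) (hsq2 : (∫ ω, ξ₂ ω ^ 2) ≤ 1 / ε ^ 2)
    (hsqdiff : (∫ ω, |ξ₁ ω - ξ₂ ω| ^ 2) ≤ 1 / ε ^ 2)
    (hdiff : ε ≤ ∫ ω, |ξ₁ ω - ξ₂ ω|) :
    min (ε ^ 4 / (4 * (1 + 2 * m))) (ε / 2) ≤
      ((volume : Measure Ω) {ω |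
        min (ε ^ 4 / (4 * (1 + 2 * m))) (ε / 2) ≤ |ξ₁ ω - ξ₂ ω| ∧
        max (ξ₁ ω) (ξ₂ ω) ≤ 1 / min (ε ^ 4 / (4 * (1 + 2 * m))) (ε / 2)}).toReal :=
  coupling_separation_probability_general ξ₁ ξ₂ h1meas h2meas h1nn h2nn h1sq h2sq m ε hm hε0 hmean1
    hmean2 hsqdiff hdiff
end

section
/- Let τ be a stopping time on a filtered probability space and let L = (L¹, …, L^N) be an N-tuple of nondecreasing continuous adapted processes on [0, τ) started from zero. Let S be the set of N-tuples F = (F¹, …, F^N) of nondecreasing continuous adapted processes on [0, τ) started from zero such that almost surely F^i(t) − F^i(s) ≤ L^i(t) − L^i(s) for all 0 ≤ s ≤ t < τ and all i. Order S by F ≪ G iff almost surely F^i(t) − F^i(s) ≤ G^i(t) − G^i(s) for all 0 ≤ s ≤ t < τ and all i. Then (S, ≪) is a complete lattice: every subset of S has a least upper bound and a greatest lower bound in S. -/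
open Set
open scoped ENNReal

/-- The time domain `[0, τ)` for a (deterministic) horizon `τ ∈ [0, ∞]`. -/
def IncDom (τ : ℝ≥0∞) : Set ℝ := {t : ℝ | 0 ≤ t ∧ ENNReal.ofReal t < τ}

/-- An `N`-tuple `F` of nondecreasing continuous paths on `[0, τ)`, started from zero,
whose increments are dominated by those of the fixed tuple `L`. -/
def GoodTuple (N : ℕ) (τ : ℝ≥0∞) (L F : Fin N → ℝ → ℝ) : Prop :=
  ∀ i, F i 0 = 0 ∧ ContinuousOn (F i) (IncDom τ) ∧ MonotoneOn (F i) (IncDom τ) ∧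
    ∀ s ∈ IncDom τ, ∀ t ∈ IncDom τ, s ≤ t → F i t - F i s ≤ L i t - L i s

/-- The partial order `F ≪ G`: every increment of `F` is dominated by the corresponding
increment of `G`. -/
def TupleLE (N : ℕ) (τ : ℝ≥0∞) (F G : Fin N → ℝ → ℝ) : Prop :=
  ∀ i, ∀ s ∈ IncDom τ, ∀ t ∈ IncDom τ, s ≤ t → F i t - F i s ≤ G i t - G i s

/-!
Increment domination `f ≼ g` means that `g - f` is nondecreasing, so the tuples in question
form the interval `[0, L]` of this order, coordinate by coordinate. The least upper bound of a
family `K` at time `t` is the supremum, over chains `0 = p₀ ≤ p₁ ≤ ⋯ ≤ pₙ = t` and choices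
`fⱼ ∈ K`, of `∑ⱼ (fⱼ pⱼ₊₁ - fⱼ pⱼ)`: concatenating chains shows that it dominates every
member of `K`, splitting a chain at an intermediate time shows that every upper bound dominates
it. It inherits continuity from `L`, and greatest lower bounds are least upper bounds of the
sets of lower bounds.
-/

theorem exists_glb_of_forall_exists_lub {α : Type*} {r : α → α → Prop} {S : Set α}
    (h : ∀ K ⊆ S, ∃ m ∈ S, (∀ x ∈ K, r x m) ∧ ∀ g ∈ S, (∀ x ∈ K, r x g) → r m g) :
    ∀ K ⊆ S, ∃ m ∈ S, (∀ x ∈ K, r m x) ∧ ∀ g ∈ S, (∀ x ∈ K, r g x) → r g m := by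
  intro K hK
  obtain ⟨m, hmS, hub, hleast⟩ := h {g ∈ S | ∀ x ∈ K, r g x} (sep_subset _ _)
  exact ⟨m, hmS, fun x hx => hleast x (hK hx) fun g hg => hg.2 x hx,
    fun g hgS hgK => hub g ⟨hgS, hgK⟩⟩

def IncrementLE (D : Set ℝ) (f g : ℝ → ℝ) : Prop :=
  ∀ s ∈ D, ∀ t ∈ D, s ≤ t → f t - f s ≤ g t - g s

section IncrementLE

variable {D : Set ℝ} {f g : ℝ → ℝ}

theorem incrementLE_zero_left_iff : IncrementLE D 0 f ↔ MonotoneOn f D := by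
  simp only [IncrementLE, MonotoneOn, Pi.zero_apply, sub_self, sub_nonneg]

theorem ContinuousOn.of_incrementLE (hf : MonotoneOn f D) (hfg : IncrementLE D f g)
    (hg : ContinuousOn g D) : ContinuousOn f D := by
  have hdist : ∀ s ∈ D, ∀ t ∈ D, dist (f s) (f t) ≤ dist (g s) (g t) := by
    intro s hs t ht
    wlog hst : s ≤ t generalizing s t
    · rw [dist_comm, dist_comm (g s)]
      exact this t ht s hs (le_of_not_ge hst)
    rw [dist_comm, dist_comm (g s), Real.dist_eq, abs_of_nonneg (sub_nonneg.2 (hf hs ht hst))]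
    exact (hfg s hs t ht hst).trans (le_abs_self _)
  rw [Metric.continuousOn_iff] at hg ⊢
  intro x hx ε hε
  obtain ⟨δ, hδ, hgδ⟩ := hg x hx ε hε
  exact ⟨δ, hδ, fun y hy hyx => (hdist y hy x hx).trans_lt (hgδ y hy hyx)⟩

end IncrementLE

/-- `ChainSum K a t x`: `x = ∑ⱼ (fⱼ pⱼ₊₁ - fⱼ pⱼ)` for some chain `a = p₀ ≤ ⋯ ≤ pₙ = t` and
some `f₀, …, fₙ₋₁ ∈ K`. -/
inductive ChainSum (K : Set (ℝ → ℝ)) (a : ℝ) : ℝ → ℝ → Prop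
  | refl : ChainSum K a a 0
  | step {s t y : ℝ} {f : ℝ → ℝ} :
      ChainSum K a s y → s ≤ t → f ∈ K → ChainSum K a t (y + (f t - f s))

namespace ChainSum

variable {D : Set ℝ} {K : Set (ℝ → ℝ)} {a s t x : ℝ} {f g : ℝ → ℝ}

theorem le (h : ChainSum K a t x) : a ≤ t := by
  induction h with
  | refl => exact le_rfl
  | step _ hst _ ih => exact ih.trans hst

theorem single (hf : f ∈ K) (hat : a ≤ t) : ChainSum K a t (f t - f a) := by
  simpa using refl.step hat hf

theorem le_sub (hD : D.OrdConnected) (hg : ∀ f ∈ K, IncrementLE D f g)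
    (h : ChainSum K a t x) (ha : a ∈ D) (ht : t ∈ D) : x ≤ g t - g a := by
  induction h with
  | refl => simp
  | @step s t y f hs hst hf ih =>
    have hsD : s ∈ D := hD.out ha ht ⟨hs.le, hst⟩
    linarith [ih hsD, hg f hf s hsD t ht hst]

theorem exists_split (h : ChainSum K a t x) (has : a ≤ s) (hst : s ≤ t) :
    ∃ y z, ChainSum K a s y ∧ ChainSum K s t z ∧ x = y + z := by
  induction h with
  | refl =>
    obtain rfl := le_antisymm hst has
    exact ⟨0, 0, refl, refl, by simp⟩
  | @step r t y f hr hrt hf ih =>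
    rcases le_total s r with hsr | hrs
    · obtain ⟨y₁, z₁, hy₁, hz₁, rfl⟩ := ih hsr
      exact ⟨y₁, z₁ + (f t - f r), hy₁, hz₁.step hrt hf, by ring⟩
    · exact ⟨y + (f s - f r), f t - f s, hr.step hrs hf, single hf hst, by ring⟩

end ChainSum

noncomputable def chainSup (K : Set (ℝ → ℝ)) (a t : ℝ) : ℝ :=
  sSup {x | ChainSum K a t x}

section ChainSup

variable {D : Set ℝ} {K : Set (ℝ → ℝ)} {a : ℝ} {f g : ℝ → ℝ}

theorem bddAbove_chainSum (hD : D.OrdConnected) (ha : a ∈ D)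
    (hg : ∀ f ∈ K, IncrementLE D f g) {t : ℝ} (ht : t ∈ D) :
    BddAbove {x | ChainSum K a t x} :=
  ⟨g t - g a, fun _ hx => hx.le_sub hD hg ha ht⟩

theorem chainSup_self (hD : D.OrdConnected) (ha : a ∈ D) (hg : ∀ f ∈ K, IncrementLE D f g) :
    chainSup K a a = 0 :=
  le_antisymm (csSup_le ⟨0, .refl⟩ fun _ hx => by simpa using hx.le_sub hD hg ha ha)
    (le_csSup (bddAbove_chainSum hD ha hg ha) .refl)

theorem incrementLE_chainSup_of_mem (hD : D.OrdConnected) (ha : IsLeast D a)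
    (hg : ∀ f ∈ K, IncrementLE D f g) (hf : f ∈ K) : IncrementLE D f (chainSup K a) := by
  intro s hs t ht hst
  have hconcat : ∀ y ∈ {x | ChainSum K a s x}, y ≤ chainSup K a t - (f t - f s) := fun y hy =>
    le_sub_iff_add_le.2 <| le_csSup (bddAbove_chainSum hD ha.1 hg ht) (ChainSum.step hy hst hf)
  have : chainSup K a s ≤ chainSup K a t - (f t - f s) :=
    csSup_le ⟨_, ChainSum.single hf (ha.2 hs)⟩ hconcat
  linarith

theorem chainSup_incrementLE (hD : D.OrdConnected) (ha : IsLeast D a) (hK : K.Nonempty)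
    (hg : ∀ f ∈ K, IncrementLE D f g) : IncrementLE D (chainSup K a) g := by
  intro s hs t ht hst
  obtain ⟨f, hf⟩ := hK
  have hsplit : ∀ x ∈ {x | ChainSum K a t x}, x ≤ chainSup K a s + (g t - g s) := by
    intro x hx
    obtain ⟨y, z, hy, hz, rfl⟩ := ChainSum.exists_split hx (ha.2 hs) hst
    exact add_le_add (le_csSup (bddAbove_chainSum hD ha.1 hg hs) hy) (hz.le_sub hD hg hs ht)
  have : chainSup K a t ≤ chainSup K a s + (g t - g s) :=
    csSup_le ⟨_, ChainSum.single hf (ha.2 ht)⟩ hsplit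
  linarith

theorem chainSup_spec (hD : D.OrdConnected) (ha : IsLeast D a) (hK : (0 : ℝ → ℝ) ∈ K)
    (hg : ∀ f ∈ K, IncrementLE D f g) (hgc : ContinuousOn g D) :
    chainSup K a a = 0 ∧ ContinuousOn (chainSup K a) D ∧ MonotoneOn (chainSup K a) D ∧
      IncrementLE D (chainSup K a) g := by
  have hmono : MonotoneOn (chainSup K a) D :=
    incrementLE_zero_left_iff.1 (incrementLE_chainSup_of_mem hD ha hg hK)
  have hle : IncrementLE D (chainSup K a) g := chainSup_incrementLE hD ha ⟨0, hK⟩ hg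
  exact ⟨chainSup_self hD ha.1 hg, ContinuousOn.of_incrementLE hmono hle hgc, hmono, hle⟩

end ChainSup

theorem ordConnected_incDom (τ : ℝ≥0∞) : (IncDom τ).OrdConnected :=
  ⟨fun _ hx _ hy _ hz => ⟨hx.1.trans hz.1, (ENNReal.ofReal_le_ofReal hz.2).trans_lt hy.2⟩⟩

theorem isLeast_incDom {τ : ℝ≥0∞} (hτ : 0 < τ) : IsLeast (IncDom τ) 0 :=
  ⟨⟨le_rfl, by simpa using hτ⟩, fun _ ht => ht.1⟩

/-- Adjoining `0` to each coordinate family keeps it nonempty without changing its upper bounds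
among good tuples. -/
theorem exists_lub_goodTuple {N : ℕ} {τ : ℝ≥0∞} (hτ : 0 < τ) {L : Fin N → ℝ → ℝ}
    (hL : GoodTuple N τ L L) :
    ∀ K ⊆ {F : Fin N → ℝ → ℝ | GoodTuple N τ L F},
      ∃ Fsup ∈ {F : Fin N → ℝ → ℝ | GoodTuple N τ L F},
        (∀ F ∈ K, TupleLE N τ F Fsup) ∧
        ∀ G ∈ {F : Fin N → ℝ → ℝ | GoodTuple N τ L F},
          (∀ F ∈ K, TupleLE N τ F G) → TupleLE N τ Fsup G := by
  intro K hK
  let coords : Fin N → Set (ℝ → ℝ) := fun i => insert 0 ((fun F => F i) '' K)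
  have hub : ∀ G ∈ {F : Fin N → ℝ → ℝ | GoodTuple N τ L F}, (∀ F ∈ K, TupleLE N τ F G) →
      ∀ i, ∀ f ∈ coords i, IncrementLE (IncDom τ) f (G i) := by
    rintro G hG hGK i f (rfl | ⟨F, hF, rfl⟩)
    · exact incrementLE_zero_left_iff.2 (hG i).2.2.1
    · exact hGK F hF i
  have hLub := hub L hL fun F hF i => (hK hF i).2.2.2
  refine ⟨fun i => chainSup (coords i) 0, fun i => ?_, fun F hF i => ?_, fun G hG hGK i => ?_⟩
  · exact chainSup_spec (ordConnected_incDom τ) (isLeast_incDom hτ) (mem_insert _ _)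
      (hLub i) (hL i).2.1
  · exact incrementLE_chainSup_of_mem (ordConnected_incDom τ) (isLeast_incDom hτ) (hLub i)
      (mem_insert_of_mem _ (mem_image_of_mem _ hF))
  · exact chainSup_incrementLE (ordConnected_incDom τ) (isLeast_incDom hτ) ⟨0, mem_insert _ _⟩
      (hub G hG hGK i)

/-- The set of increment-dominated tuples is a complete lattice under `≪`: every subset
has a least upper bound and a greatest lower bound within the set. -/
theorem increment_dominated_complete_lattice {N : ℕ} (τ : ℝ≥0∞) (hτ : 0 < τ)
    (L : Fin N → ℝ → ℝ) (hL : GoodTuple N τ L L) :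
    ∀ K ⊆ {F : Fin N → ℝ → ℝ | GoodTuple N τ L F},
      (∃ Fsup ∈ {F : Fin N → ℝ → ℝ | GoodTuple N τ L F},
        (∀ F ∈ K, TupleLE N τ F Fsup) ∧
        ∀ G ∈ {F : Fin N → ℝ → ℝ | GoodTuple N τ L F},
          (∀ F ∈ K, TupleLE N τ F G) → TupleLE N τ Fsup G) ∧
      (∃ Finf ∈ {F : Fin N → ℝ → ℝ | GoodTuple N τ L F},
        (∀ F ∈ K, TupleLE N τ Finf F) ∧
        ∀ G ∈ {F : Fin N → ℝ → ℝ | GoodTuple N τ L F},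
          (∀ F ∈ K, TupleLE N τ G F) → TupleLE N τ G Finf) := by
  have hlub := exists_lub_goodTuple hτ hL
  exact fun K hK => ⟨hlub K hK, exists_glb_of_forall_exists_lub hlub K hK⟩
end
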